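/- arXiv:0706.1570 — 10 statements merged into one kernel-verified Lean document; each statement's English description precedes it below -/
import Mathlib

section
/- Let g ≥ 1 be an integer and let F₁,…,F_g and G₁,…,G_g be lifts of orientation-preserving circle homeomorphisms. Suppose the product of commutators [F₁,G₁] ∘ [F₂,G₂] ∘ … ∘ [F_g,G_g] equals the integer translation T₋ₑ : x ↦ x − e for some integer e. Then |e| ≤ 2g − 1. (The Milnor–Wood inequality for flat circle bundles over a closed orientable surface of genus g, as proved in Section 2.) -/
/-!
The translation number `τ` is conjugation invariant and `τ(F⁻¹) = -τ(F)`, and for a continuous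
lift `G` there is a point `x` with `G x = x + τ G`; since `F y < y + τ F + 1` everywhere, this gives
`τ(F G) ≤ m + 1` whenever `τ F + τ G ≤ m ∈ ℤ`. Hence a commutator `(F G F⁻¹) G⁻¹` has `τ ≤ 1`,
and so `|τ| ≤ 1`, and by induction a product of `g ≥ 1` lifts with `|τ| ≤ 1` has `|τ| ≤ 2g - 1`.
Since `x ↦ x - e` has translation number `-e`, this bounds `|e|`.
-/

open scoped commutatorElement

namespace CircleDeg1Lift

local notation "τ" => translationNumber

theorem continuous_of_isUnit {f : CircleDeg1Lift} (hf : IsUnit f) : Continuous f :=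
  (continuous_iff_surjective f).2 (isUnit_iff_bijective.1 hf).surjective

theorem translationNumber_mul_le_of_add_le_int (f : CircleDeg1Lift) {g : CircleDeg1Lift}
    (hg : Continuous g) {m : ℤ} (h : τ f + τ g ≤ m) : τ (f * g) ≤ m + 1 := by
  obtain ⟨x, hx⟩ := g.exists_eq_add_translationNumber hg
  have hfx := f.map_lt_add_translationNumber_add_one (g x)
  have hle : (f * g) x ≤ x + ((m + 1 : ℤ) : ℝ) := by
    rw [mul_apply]
    push_cast
    linarith
  exact_mod_cast translationNumber_le_of_le_add_int _ hle

theorem translationNumber_commutatorElement_le_one (f g : CircleDeg1Liftˣ) :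
    τ ↑⁅f, g⁆ ≤ 1 := by
  have hsum : τ (↑f * ↑g * ↑f⁻¹) + τ ↑g⁻¹ ≤ ((0 : ℤ) : ℝ) := by
    rw [translationNumber_conj_eq, translationNumber_units_inv]
    simp
  simpa [commutatorElement_def] using
    translationNumber_mul_le_of_add_le_int _ (continuous_of_isUnit g⁻¹.isUnit) hsum

theorem abs_translationNumber_commutatorElement_le_one (f g : CircleDeg1Liftˣ) :
    |τ ↑⁅f, g⁆| ≤ 1 := by
  have hinv : -τ ↑⁅f, g⁆ ≤ 1 := by
    rw [← translationNumber_units_inv, commutatorElement_inv]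
    exact translationNumber_commutatorElement_le_one g f
  exact abs_le.2 ⟨by linarith, translationNumber_commutatorElement_le_one f g⟩

theorem translationNumber_list_prod_le (l : List CircleDeg1Liftˣ) (hl : l ≠ [])
    (h : ∀ c ∈ l, τ c ≤ 1) : τ ↑l.prod ≤ 2 * l.length - 1 := by
  obtain ⟨a, t, rfl⟩ := List.exists_cons_of_ne_nil hl
  induction t generalizing a with
  | nil => norm_num [h a (by simp)]
  | cons b t ih =>
    have htail := ih b (by simp) fun c hc => h c (List.mem_cons_of_mem a hc)
    have hsum : τ a + τ ↑(b :: t).prod ≤ ((2 * (t.length + 1) : ℤ) : ℝ) := by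
      rw [List.length_cons] at htail
      push_cast at htail ⊢
      linarith [h a (by simp)]
    have hprod := translationNumber_mul_le_of_add_le_int _
      (continuous_of_isUnit (b :: t).prod.isUnit) hsum
    rw [List.prod_cons, Units.val_mul, List.length_cons, List.length_cons]
    push_cast at hprod ⊢
    linarith

theorem abs_translationNumber_list_prod_le (l : List CircleDeg1Liftˣ) (hl : l ≠ [])
    (h : ∀ c ∈ l, |τ c| ≤ 1) : |τ ↑l.prod| ≤ 2 * l.length - 1 := by
  have hupper := translationNumber_list_prod_le l hl fun c hc => (abs_le.1 (h c hc)).2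
  have hlower := translationNumber_list_prod_le (l.map (·⁻¹)).reverse (by simpa using hl)
    fun c hc => by
      obtain ⟨d, hd, rfl⟩ := List.mem_map.1 (List.mem_reverse.1 hc)
      rw [translationNumber_units_inv]
      exact neg_le.2 (abs_le.1 (h d hd)).1
  rw [← List.prod_inv_reverse, translationNumber_units_inv, List.length_reverse,
    List.length_map] at hlower
  exact abs_le.2 ⟨by linarith, hupper⟩

end CircleDeg1Lift

open CircleDeg1Lift in
/-- **Milnor–Wood inequality** (Section 2). If `F₁,…,F_g` and `G₁,…,G_g` are lifts of
orientation-preserving circle homeomorphisms (units of `CircleDeg1Lift`) whose product of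
commutators `[F₁,G₁] ∘ ⋯ ∘ [F_g,G_g]` is the translation `x ↦ x - e` by an integer `e`,
then `|e| ≤ 2 * g - 1`. -/
theorem milnor_wood (g : ℕ) (hg : 1 ≤ g) (F G : Fin g → CircleDeg1Liftˣ) (e : ℤ)
    (h : (List.ofFn (fun i : Fin g => ⁅F i, G i⁆)).prod
        = CircleDeg1Lift.translate (Multiplicative.ofAdd (-(e : ℝ)))) :
    |e| ≤ 2 * (g : ℤ) - 1 := by
  have hbound := abs_translationNumber_list_prod_le (List.ofFn fun i => ⁅F i, G i⁆)
    (by simp; omega) (by simp [abs_translationNumber_commutatorElement_le_one])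
  rw [h, translationNumber_translate, abs_neg, List.length_ofFn] at hbound
  exact_mod_cast hbound
end

section
/- Let F and G be lifts of orientation-preserving circle homeomorphisms such that the commutator [F,G] = F ∘ G ∘ F⁻¹ ∘ G⁻¹ equals the integer translation T₋ₑ : x ↦ x − e for some integer e. Then e = 0. (A flat circle bundle over the torus has Euler number 0, the genus-one case of the Milnor–Wood inequality obtained by passing to finite covers.) -/
/-! The translation number `τ` is invariant under conjugation and additive on
commuting lifts. If `[F,G] = T` with `T` commuting with `G`, then `F G F⁻¹ = T G`, so
`τ G = τ (T G) = τ T + τ G`, hence `τ T = 0`; and `τ (T₋ₑ) = -e`. -/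

open scoped commutatorElement

namespace CircleDeg1Lift

theorem commute_translate_intCast (n : ℤ) (f : CircleDeg1Lift) :
    Commute (translate (Multiplicative.ofAdd (n : ℝ)) : CircleDeg1Lift) f := by
  rw [commute_iff_commute]
  intro x
  simpa only [translate_apply] using (f.commute_int_add n x).symm

theorem translationNumber_commutatorElement_eq_zero_of_commute {F G : CircleDeg1Liftˣ}
    (h : Commute ((⁅F, G⁆ : CircleDeg1Liftˣ) : CircleDeg1Lift) G) : translationNumber (⁅F, G⁆ : CircleDeg1Liftˣ) = 0 := by
  have hconj : SemiconjBy (F : CircleDeg1Lift) G (⁅F, G⁆ * G : CircleDeg1Liftˣ) := by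
    simp only [SemiconjBy, commutatorElement_def, ← Units.val_mul]
    group
  have hτ := translationNumber_eq_of_semiconjBy hconj
  rw [Units.val_mul, translationNumber_mul_of_commute h] at hτ
  linarith

end CircleDeg1Lift

open CircleDeg1Lift

/-- Genus-one case of the Milnor–Wood inequality (Section 2): if the commutator
`[F,G] = F ∘ G ∘ F⁻¹ ∘ G⁻¹` of two lifts of orientation-preserving circle homeomorphisms
equals the integer translation `x ↦ x - e`, then `e = 0` (a flat circle bundle over the
torus has Euler number `0`). -/
theorem euler_number_torus_zero (F G : CircleDeg1Liftˣ) (e : ℤ)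
    (h : ⁅F, G⁆ = CircleDeg1Lift.translate (Multiplicative.ofAdd (-(e : ℝ)))) :
    e = 0 := by
  have hcomm : Commute ((⁅F, G⁆ : CircleDeg1Liftˣ) : CircleDeg1Lift) G := by
    rw [h]
    exact_mod_cast commute_translate_intCast (-e) G
  have hτ := translationNumber_commutatorElement_eq_zero_of_commute hcomm
  rw [h, translationNumber_translate] at hτ
  exact_mod_cast neg_eq_zero.mp hτ
end

section
/- Let F be a lift of an orientation-preserving circle homeomorphism, i.e. a strictly increasing bijection F : ℝ → ℝ with F(x + 1) = F(x) + 1, inducing the orientation-preserving homeomorphism of the real projective line that sends the line spanned by u(θ) = (cos πθ, sin πθ) to the line spanned by u(F(θ)). Then there exists a 2×2 real matrix M with det M > 0 such that u(θ)ᵀ · M · u(F(θ)) ≠ 0 for all θ ∈ ℝ. (Lemma 5: in the projective model of anti-de Sitter space, there is a spacelike plane of ℝP³ disjoint from the graph, on the quadric AD = BC, of an orientation-preserving homeomorphism between the two rulings.) -/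
/-!
The displacement `θ ↦ F θ - θ` of a lift is continuous and `1`-periodic, and monotonicity of `F`
bounds its oscillation strictly by `1`, so it takes values in `(c - 1/2, c + 1/2)` for some `c`.
For the rotation `R` by `-π c` (of determinant `1`) one has
`u(θ)ᵀ R u(F θ) = cos (π (F θ - θ - c)) > 0`.
-/

open Real

/-- The parametrization of the real projective line: `u θ` spans the line with angle `π θ`. -/
noncomputable def uRP1 (θ : ℝ) : Fin 2 → ℝ := ![Real.cos (Real.pi * θ), Real.sin (Real.pi * θ)]

open Function Matrix

noncomputable def rotationMatrix (t : ℝ) : Matrix (Fin 2) (Fin 2) ℝ :=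
  !![cos t, -sin t; sin t, cos t]

theorem rotationMatrix_det (t : ℝ) : (rotationMatrix t).det = 1 := by
  rw [rotationMatrix, Matrix.det_fin_two_of]
  linear_combination cos_sq_add_sin_sq t

theorem rotationMatrix_mulVec_uRP1 (α φ : ℝ) :
    rotationMatrix (π * α) *ᵥ uRP1 φ = uRP1 (φ + α) := by
  ext i
  fin_cases i <;>
    simp only [rotationMatrix, uRP1, mulVec, dotProduct, Fin.sum_univ_two, Fin.zero_eta, Fin.mk_one,
      of_apply, cons_val', cons_val_fin_one, cons_val_zero, cons_val_one, mul_add, cos_add,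
      sin_add] <;>
    ring

theorem uRP1_dotProduct_uRP1 (θ φ : ℝ) : uRP1 θ ⬝ᵥ uRP1 φ = cos (π * (φ - θ)) := by
  simp only [uRP1, dotProduct, Fin.sum_univ_two, cons_val_zero, cons_val_one, mul_sub, cos_sub]
  ring

namespace CircleDeg1Lift

theorem periodic_map_sub (f : CircleDeg1Lift) : Periodic (fun x => f x - x) 1 := fun x => by
  simp only [f.map_add_one]
  ring

theorem exists_forall_abs_map_sub_sub_lt (f : CircleDeg1Lift) (hf : Continuous f) :
    ∃ c, ∀ x, |f x - x - c| < 1 / 2 := by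
  have hrange := f.periodic_map_sub.compact_of_continuous one_ne_zero (hf.sub continuous_id)
  obtain ⟨_, ⟨a, rfl⟩, hmax⟩ := hrange.exists_isGreatest (Set.range_nonempty _)
  obtain ⟨_, ⟨b, rfl⟩, hmin⟩ := hrange.exists_isLeast (Set.range_nonempty _)
  -- a minimum point can be chosen in `[a, a + 1)`, to the right of the maximum point `a`
  obtain ⟨b', ⟨hab', hb'a⟩, hbb'⟩ := f.periodic_map_sub.exists_mem_Ico one_pos b a
  have hosc : (f a - a) - (f b' - b') < 1 := by linarith [f.mono hab']
  refine ⟨((f a - a) + (f b - b)) / 2, fun x => abs_lt.2 ⟨?_, ?_⟩⟩ <;>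
    linarith [hmax ⟨x, rfl⟩, hmin ⟨x, rfl⟩, hbb']

end CircleDeg1Lift

/-- **Lemma 5.** For every lift `F` of an orientation-preserving circle homeomorphism there is a
`2 × 2` real matrix `M` with `det M > 0` (a spacelike plane of `ℝP³` in the projective model of
anti-de Sitter space) such that `u(θ)ᵀ M u(F θ) ≠ 0` for all `θ`, i.e. the plane is disjoint
from the graph of the induced homeomorphism on the quadric `AD = BC`. -/
theorem spacelike_plane_disjoint_from_graph (F : CircleDeg1Liftˣ) :
    ∃ M : Matrix (Fin 2) (Fin 2) ℝ, 0 < M.det ∧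
      ∀ θ : ℝ, dotProduct (uRP1 θ) (M.mulVec (uRP1 ((F : CircleDeg1Lift) θ))) ≠ 0 := by
  obtain ⟨c, hc⟩ :=
    (F : CircleDeg1Lift).exists_forall_abs_map_sub_sub_lt (CircleDeg1Lift.toOrderIso F).continuous
  refine ⟨rotationMatrix (π * -c), by rw [rotationMatrix_det]; exact one_pos, fun θ => ?_⟩
  rw [rotationMatrix_mulVec_uRP1, uRP1_dotProduct_uRP1]
  refine (cos_pos_of_mem_Ioo ⟨?_, ?_⟩).ne' <;>
    nlinarith [abs_lt.1 (hc θ), pi_pos]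
end

section
/- Let S be a strictly spacelike entire graph in 3-dimensional Minkowski space. Then the domain of dependence D(S) is convex; moreover, for every q ∉ D(S) there exist a future-directed null vector n and c ∈ ℝ such that B(x, n) < c for all x ∈ D(S) while B(q, n) ≥ c. In particular D(S) is an intersection of open half-spaces whose boundaries are null planes. (Proposition 11(a) and its proof.) -/
/-!
For a future-directed null `n`, the set of `x` with `B(x, n) < B(s, n)` for some `s ∈ S` is the
union of the open half-spaces below parallel null planes, hence convex. `D(S)` is the
intersection of these sets over all `n`, and a point `q` outside it misses one of them, which
gives the separating null plane `B(·, n) = B(q, n)`.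

Points of `S` lie in every such set because moving along the horizontal part of `n` raises `h` by
less than `n₃`; points of `I⁺(S)` because `B(timelike, null) < 0`; points whose null rays meet `S`
because `B(·, n)` is constant along the ray in direction `n`. Conversely, if `x` is below the graph
and in every such set, each causal ray from `x` meets `S` by the intermediate value theorem: a
timelike ray outruns the 1-Lipschitz `h`, and a null ray in direction `v` eventually enters the
closed future cone of the point `s ∈ S` with `B(x, v) < B(s, v)`.
-/

noncomputable section

/-- The Minkowski bilinear form `B(v,w) = v₁w₁ + v₂w₂ − v₃w₃` on `ℝ³`. -/
def mB (v w : Fin 3 → ℝ) : ℝ := v 0 * w 0 + v 1 * w 1 - v 2 * w 2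

/-- The Minkowski quadratic form `Q(v) = B(v,v)`. -/
def mQ (v : Fin 3 → ℝ) : ℝ := mB v v

/-- `v` is future-directed timelike: `Q v < 0` and `v₃ > 0`. -/
def FutureTimelike (v : Fin 3 → ℝ) : Prop := mQ v < 0 ∧ 0 < v 2

/-- `v` is future-directed causal: `Q v ≤ 0` and `v₃ > 0`. -/
def FutureCausal (v : Fin 3 → ℝ) : Prop := mQ v ≤ 0 ∧ 0 < v 2

/-- `v` is future-directed null: `Q v = 0` and `v₃ > 0`. -/
def FutureNull (v : Fin 3 → ℝ) : Prop := mQ v = 0 ∧ 0 < v 2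

/-- `S ⊆ ℝ³` is a strictly spacelike entire graph: the graph of a function
`h : ℝ² → ℝ` with `|h p − h q| < ‖p − q‖` (Euclidean distance) for `p ≠ q`. -/
def IsStrictlySpacelikeGraph (S : Set (Fin 3 → ℝ)) : Prop :=
  ∃ h : EuclideanSpace ℝ (Fin 2) → ℝ,
    (∀ p q : EuclideanSpace ℝ (Fin 2), p ≠ q → |h p - h q| < dist p q) ∧
    S = Set.range fun p : EuclideanSpace ℝ (Fin 2) => ![p 0, p 1, h p]

/-- The future `I⁺(S)` of a set `S` in Minkowski space. -/
def IPlus (S : Set (Fin 3 → ℝ)) : Set (Fin 3 → ℝ) :=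
  {x | ∃ s ∈ S, FutureTimelike (x - s)}

/-- The domain of dependence
`D(S) = S ∪ I⁺(S) ∪ {x : every future-directed causal ray from x meets S}`. -/
def DOD (S : Set (Fin 3 → ℝ)) : Set (Fin 3 → ℝ) :=
  S ∪ IPlus S ∪
    {x | ∀ v : Fin 3 → ℝ, FutureCausal v → ∃ t : ℝ, 0 ≤ t ∧ x + t • v ∈ S}

/-- The affine plane through `p` with (Minkowski) normal `n` supports `D` at `p`:
`D` lies in one of the two closed half-spaces bounded by `{x : B (x − p) n = 0}`. -/
def SupportingAt (D : Set (Fin 3 → ℝ)) (p n : Fin 3 → ℝ) : Prop :=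
  (∀ x ∈ D, mB (x - p) n ≤ 0) ∨ (∀ x ∈ D, 0 ≤ mB (x - p) n)

end

open RealInnerProductSpace

local notation "ℝ²" => EuclideanSpace ℝ (Fin 2)

theorem convex_setOf_exists_lt {E : Type*} [AddCommGroup E] [Module ℝ E] {f : E → ℝ}
    (hf : IsLinearMap ℝ f) (S : Set E) : Convex ℝ {x | ∃ s ∈ S, f x < f s} := by
  have hlower : IsLowerSet {t : ℝ | ∃ s ∈ S, t < f s} :=
    fun _ _ hts ⟨s, hs, hlt⟩ => ⟨s, hs, hts.trans_lt hlt⟩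
  exact hlower.ordConnected.convex.is_linear_preimage hf

theorem exists_norm_smul_sub_le {F : Type*} [NormedAddCommGroup F] [InnerProductSpace ℝ F]
    {u w : F} {d : ℝ} (h : d * ‖u‖ < ⟪w, u⟫) : ∃ T, 0 ≤ T ∧ ‖T • u - w‖ ≤ T * ‖u‖ - d := by
  set c := ⟪w, u⟫ - d * ‖u‖
  have hc : 0 < c := sub_pos.2 h
  have hu : 0 < ‖u‖ := norm_pos_iff.2 fun hu => by simp [hu] at h
  set T := max (d / ‖u‖) (‖w‖ ^ 2 / (2 * c))
  have hTd : d ≤ T * ‖u‖ := (div_le_iff₀ hu).1 (le_max_left _ _)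
  have hTw : ‖w‖ ^ 2 ≤ T * (2 * c) := (div_le_iff₀ (by positivity)).1 (le_max_right _ _)
  have hT : 0 ≤ T := (by positivity : 0 ≤ ‖w‖ ^ 2 / (2 * c)).trans (le_max_right _ _)
  refine ⟨T, hT, ?_⟩
  rw [← sq_le_sq₀ (norm_nonneg _) (sub_nonneg.2 hTd), norm_sub_sq_real, norm_smul,
    real_inner_smul_left, real_inner_comm, Real.norm_eq_abs, abs_of_nonneg hT]
  nlinarith [sq_nonneg d]

theorem lipschitzWith_one_of_abs_sub_lt {α : Type*} [PseudoMetricSpace α] {h : α → ℝ}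
    (hh : ∀ p q, p ≠ q → |h p - h q| < dist p q) : LipschitzWith 1 h :=
  LipschitzWith.of_dist_le_mul fun p q => by
    rw [NNReal.coe_one, one_mul, Real.dist_eq]
    rcases eq_or_ne p q with rfl | hpq
    · simp
    · exact (hh p q hpq).le

def horiz : (Fin 3 → ℝ) →ₗ[ℝ] ℝ² where
  toFun v := !₂[v 0, v 1]
  map_add' v w := by ext i; fin_cases i <;> rfl
  map_smul' c v := by ext i; fin_cases i <;> rfl

theorem inner_horiz (v w : Fin 3 → ℝ) : ⟪horiz v, horiz w⟫ = v 0 * w 0 + v 1 * w 1 := by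
  simp [horiz, PiLp.inner_apply, Fin.sum_univ_two, mul_comm]

theorem mB_eq_inner_horiz (v w : Fin 3 → ℝ) : mB v w = ⟪horiz v, horiz w⟫ - v 2 * w 2 := by
  rw [inner_horiz, mB]

theorem mQ_eq_norm_horiz_sq (v : Fin 3 → ℝ) : mQ v = ‖horiz v‖ ^ 2 - v 2 ^ 2 := by
  rw [mQ, mB_eq_inner_horiz, real_inner_self_eq_norm_sq, sq, sq]

theorem isLinearMap_mB_left (n : Fin 3 → ℝ) : IsLinearMap ℝ fun x => mB x n :=
  ⟨fun x y => by simp only [mB, Pi.add_apply]; ring,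
    fun c x => by simp only [mB, Pi.smul_apply, smul_eq_mul]; ring⟩

theorem futureTimelike_iff {v : Fin 3 → ℝ} : FutureTimelike v ↔ ‖horiz v‖ < v 2 ∧ 0 < v 2 := by
  rw [FutureTimelike, mQ_eq_norm_horiz_sq, sub_neg]
  exact and_congr_left fun hv => sq_lt_sq₀ (norm_nonneg _) hv.le

theorem futureCausal_iff {v : Fin 3 → ℝ} : FutureCausal v ↔ ‖horiz v‖ ≤ v 2 ∧ 0 < v 2 := by
  rw [FutureCausal, mQ_eq_norm_horiz_sq, sub_nonpos]
  exact and_congr_left fun hv => sq_le_sq₀ (norm_nonneg _) hv.le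

theorem futureNull_iff {v : Fin 3 → ℝ} : FutureNull v ↔ ‖horiz v‖ = v 2 ∧ 0 < v 2 := by
  rw [FutureNull, mQ_eq_norm_horiz_sq, sub_eq_zero]
  exact and_congr_left fun hv => sq_eq_sq₀ (norm_nonneg _) hv.le

theorem FutureNull.futureCausal {n : Fin 3 → ℝ} (hn : FutureNull n) : FutureCausal n :=
  ⟨hn.1.le, hn.2⟩

theorem FutureTimelike.mB_neg {v n : Fin 3 → ℝ} (hv : FutureTimelike v) (hn : FutureCausal n) :
    mB v n < 0 := by
  obtain ⟨hv, -⟩ := futureTimelike_iff.1 hv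
  obtain ⟨hn, hn₂⟩ := futureCausal_iff.1 hn
  rw [mB_eq_inner_horiz, sub_neg]
  calc ⟪horiz v, horiz n⟫ ≤ ‖horiz v‖ * ‖horiz n‖ := real_inner_le_norm _ _
    _ ≤ ‖horiz v‖ * n 2 := by gcongr
    _ < v 2 * n 2 := by gcongr

def graphPoint (h : ℝ² → ℝ) (p : ℝ²) : Fin 3 → ℝ := ![p 0, p 1, h p]

theorem graphPoint_two (h : ℝ² → ℝ) (p : ℝ²) : graphPoint h p 2 = h p := rfl

theorem horiz_graphPoint (h : ℝ² → ℝ) (p : ℝ²) : horiz (graphPoint h p) = p := by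
  ext i; fin_cases i <;> rfl

theorem mem_range_graphPoint_iff {h : ℝ² → ℝ} {x : Fin 3 → ℝ} :
    x ∈ Set.range (graphPoint h) ↔ h (horiz x) = x 2 := by
  constructor
  · rintro ⟨p, rfl⟩
    rw [horiz_graphPoint, graphPoint_two]
  · intro hx
    refine ⟨horiz x, ?_⟩
    ext i; fin_cases i
    · rfl
    · rfl
    · exact hx

theorem exists_mB_lt_of_mem_range_graphPoint {h : ℝ² → ℝ}
    (hh : ∀ p q : ℝ², p ≠ q → |h p - h q| < dist p q) {s n : Fin 3 → ℝ}
    (hs : s ∈ Set.range (graphPoint h)) (hn : FutureNull n) :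
    ∃ s' ∈ Set.range (graphPoint h), mB s n < mB s' n := by
  obtain ⟨hnorm, hn₂⟩ := futureNull_iff.1 hn
  rw [mem_range_graphPoint_iff] at hs
  set p := horiz s + horiz n
  have hdist : dist p (horiz s) = n 2 := by rw [dist_eq_norm, add_sub_cancel_left, hnorm]
  have hne : p ≠ horiz s := fun he => by rw [he, dist_self] at hdist; linarith
  have hrise : h p - h (horiz s) < n 2 := hdist ▸ (abs_lt.1 (hh p _ hne)).2
  refine ⟨graphPoint h p, ⟨p, rfl⟩, ?_⟩
  rw [mB_eq_inner_horiz, mB_eq_inner_horiz, horiz_graphPoint, inner_add_left,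
    real_inner_self_eq_norm_sq, hnorm, ← hs, graphPoint_two]
  linarith [mul_lt_mul_of_pos_right hrise hn₂]

theorem exists_mB_lt_of_mem_dod {h : ℝ² → ℝ}
    (hh : ∀ p q : ℝ², p ≠ q → |h p - h q| < dist p q) {x n : Fin 3 → ℝ}
    (hx : x ∈ DOD (Set.range (graphPoint h))) (hn : FutureNull n) :
    ∃ s ∈ Set.range (graphPoint h), mB x n < mB s n := by
  rcases hx with (hxS | ⟨s, hs, hxs⟩) | hray
  · exact exists_mB_lt_of_mem_range_graphPoint hh hxS hn
  · have hneg := hxs.mB_neg hn.futureCausal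
    refine ⟨s, hs, ?_⟩
    simp only [mB, Pi.sub_apply] at hneg ⊢
    linarith
  · obtain ⟨t, -, hs⟩ := hray n hn.futureCausal
    have hconst : mB (x + t • n) n = mB x n := by
      have hQ : mQ n = 0 := hn.1
      simp only [mQ, mB, Pi.add_apply, Pi.smul_apply, smul_eq_mul] at hQ ⊢
      linear_combination t * hQ
    simpa only [hconst] using exists_mB_lt_of_mem_range_graphPoint hh hs hn

theorem le_of_norm_horiz_sub_le {h : ℝ² → ℝ} (hh : LipschitzWith 1 h) {y : Fin 3 → ℝ} {p : ℝ²}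
    (hy : ‖horiz y - p‖ ≤ y 2 - h p) : h (horiz y) ≤ y 2 := by
  have hlip := hh.dist_le_mul (horiz y) p
  rw [NNReal.coe_one, one_mul, Real.dist_eq, dist_eq_norm] at hlip
  linarith [le_abs_self (h (horiz y) - h p)]

theorem exists_ray_mem_range_graphPoint {h : ℝ² → ℝ} (hh : Continuous h) {x v : Fin 3 → ℝ}
    {T : ℝ} (hx : x 2 ≤ h (horiz x)) (hT : 0 ≤ T) (hxT : h (horiz (x + T • v)) ≤ (x + T • v) 2) :
    ∃ t : ℝ, 0 ≤ t ∧ x + t • v ∈ Set.range (graphPoint h) := by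
  let g (t : ℝ) := h (horiz (x + t • v)) - (x + t • v) 2
  have hg : Continuous g := by
    have := horiz.continuous_of_finiteDimensional
    fun_prop
  obtain ⟨t, ⟨ht, -⟩, hgt⟩ := intermediate_value_Icc' hT hg.continuousOn
    (show (0 : ℝ) ∈ Set.Icc (g T) (g 0) from ⟨sub_nonpos.2 hxT, by simpa [g] using hx⟩)
  exact ⟨t, ht, mem_range_graphPoint_iff.2 (sub_eq_zero.1 hgt)⟩

theorem exists_ray_mem_range_graphPoint_of_lt {h : ℝ² → ℝ} (hh : LipschitzWith 1 h)
    {x v : Fin 3 → ℝ} (hx : x 2 < h (horiz x)) (hv : FutureCausal v)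
    (hxv : FutureNull v → ∃ s ∈ Set.range (graphPoint h), mB x v < mB s v) :
    ∃ t : ℝ, 0 ≤ t ∧ x + t • v ∈ Set.range (graphPoint h) := by
  suffices ∃ T, 0 ≤ T ∧ ∃ p, ‖horiz x + T • horiz v - p‖ ≤ x 2 + T * v 2 - h p by
    obtain ⟨T, hT, p, hp⟩ := this
    refine exists_ray_mem_range_graphPoint hh.continuous hx.le hT
      (le_of_norm_horiz_sub_le hh (p := p) ?_)
    simpa using hp
  obtain ⟨hle, hv₂⟩ := futureCausal_iff.1 hv
  rcases hle.lt_or_eq with htime | hnull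
  · set T := (h (horiz x) - x 2) / (v 2 - ‖horiz v‖)
    have hT : 0 ≤ T := div_nonneg (by linarith) (by linarith)
    have hTv : T * (v 2 - ‖horiz v‖) = h (horiz x) - x 2 := div_mul_cancel₀ _ (by linarith)
    refine ⟨T, hT, horiz x, ?_⟩
    rw [add_sub_cancel_left, norm_smul, Real.norm_of_nonneg hT]
    linarith
  · obtain ⟨s, hs, hxs⟩ := hxv (futureNull_iff.2 ⟨hnull, hv₂⟩)
    rw [mem_range_graphPoint_iff] at hs
    rw [mB_eq_inner_horiz, mB_eq_inner_horiz, ← hs] at hxs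
    obtain ⟨T, hT, hTs⟩ := exists_norm_smul_sub_le (u := horiz v) (w := horiz s - horiz x)
      (d := h (horiz s) - x 2) (by rw [inner_sub_left, hnull]; linarith)
    refine ⟨T, hT, horiz s, ?_⟩
    rw [hnull] at hTs
    rw [show horiz x + T • horiz v - horiz s = T • horiz v - (horiz s - horiz x) by abel]
    linarith

theorem mem_dod_of_forall_exists_mB_lt {h : ℝ² → ℝ} (hh : LipschitzWith 1 h) {x : Fin 3 → ℝ}
    (hx : ∀ n, FutureNull n → ∃ s ∈ Set.range (graphPoint h), mB x n < mB s n) :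
    x ∈ DOD (Set.range (graphPoint h)) := by
  rcases lt_trichotomy (x 2) (h (horiz x)) with hlt | heq | hgt
  · exact Or.inr fun v hv => exists_ray_mem_range_graphPoint_of_lt hh hlt hv (hx v)
  · exact Or.inl (Or.inl (mem_range_graphPoint_iff.2 heq.symm))
  · refine Or.inl (Or.inr ⟨graphPoint h (horiz x), ⟨_, rfl⟩, futureTimelike_iff.2 ?_⟩)
    rw [map_sub, horiz_graphPoint, sub_self, norm_zero, Pi.sub_apply, graphPoint_two]
    exact ⟨sub_pos.2 hgt, sub_pos.2 hgt⟩

theorem dod_eq_of_isStrictlySpacelikeGraph {S : Set (Fin 3 → ℝ)}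
    (hS : IsStrictlySpacelikeGraph S) :
    DOD S = {x | ∀ n, FutureNull n → ∃ s ∈ S, mB x n < mB s n} := by
  obtain ⟨h, hh, rfl⟩ := hS
  exact Set.Subset.antisymm (fun x hx n hn => exists_mB_lt_of_mem_dod hh hx hn)
    fun x hx => mem_dod_of_forall_exists_mB_lt (lipschitzWith_one_of_abs_sub_lt hh) hx

/-- **Proposition 11(a).** The domain of dependence of a strictly spacelike entire graph is
convex; moreover every point outside it is separated from it by an open half-space whose
boundary is a null plane: for `q ∉ D(S)` there are a future-directed null vector `n` and
`c ∈ ℝ` with `B(x,n) < c` on `D(S)` and `B(q,n) ≥ c`. -/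
theorem domain_of_dependence_convex (S : Set (Fin 3 → ℝ))
    (hS : IsStrictlySpacelikeGraph S) :
    Convex ℝ (DOD S) ∧
      ∀ q : Fin 3 → ℝ, q ∉ DOD S →
        ∃ n : Fin 3 → ℝ, ∃ c : ℝ, FutureNull n ∧
          (∀ x ∈ DOD S, mB x n < c) ∧ c ≤ mB q n := by
  rw [dod_eq_of_isStrictlySpacelikeGraph hS]
  refine ⟨?_, fun q hq => ?_⟩
  · simp only [Set.ofPred_forall]
    exact convex_iInter₂ fun n _ => convex_setOf_exists_lt (isLinearMap_mB_left n) S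
  · simp only [Set.mem_ofPred_eq] at hq
    push Not at hq
    obtain ⟨n, hn, hqn⟩ := hq
    exact ⟨n, mB q n, hn, fun x hx => (hx n hn).elim fun s ⟨hs, hxs⟩ => hxs.trans_le (hqn s hs),
      le_rfl⟩
end

section
/- Let X be a nonempty complete metric space and f : X → ℝ² a local homeomorphism such that dist(x, y) ≤ dist(f(x), f(y)) for all x, y ∈ X. Then f is a covering map; in particular, if X is connected then f is a homeomorphism onto ℝ². (The engine of Lemma 1: the distance-increasing projection of a complete spacelike surface to the plane is a covering, hence the surface is a graph.) -/
/-!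
A continuous distance-increasing map `f` out of a complete space is a topological embedding
with closed image: a sequence whose image converges is Cauchy. Being also a local homeomorphism,
`f` is then an open and closed embedding, so it is a covering map, and its
image is a nonempty clopen subset of the connected plane, i.e. all of it.
-/

open Set Function Filter Topology Uniformity NNReal

namespace AntilipschitzWith

variable {α β : Type*} [EMetricSpace α] [EMetricSpace β] [CompleteSpace α] {K : ℝ≥0}
  {f : α → β}

theorem isClosed_range_of_continuous (hf : AntilipschitzWith K f) (hc : Continuous f) :
    IsClosed (range f) := by
  refine IsSeqClosed.isClosed fun u y hu hy => ?_
  choose x hx using hu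
  have hfx : Tendsto (f ∘ x) atTop (𝓝 y) := by simpa only [comp_def, hx] using hy
  have hfx_cauchy : Tendsto (Prod.map f f ∘ Prod.map x x) atTop (𝓤 β) :=
    cauchySeq_iff_tendsto.1 hfx.cauchySeq
  have hx_cauchy : CauchySeq x := cauchySeq_iff_tendsto.2 <|
    (tendsto_comap_iff.2 hfx_cauchy).mono_right hf.comap_uniformity_le
  obtain ⟨a, ha⟩ := cauchySeq_tendsto_of_complete hx_cauchy
  exact ⟨a, tendsto_nhds_unique ((hc.tendsto a).comp ha) hfx⟩

theorem isClosedEmbedding_of_continuous (hf : AntilipschitzWith K f) (hc : Continuous f) :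
    IsClosedEmbedding f :=
  ⟨hf.isEmbedding hc, hf.isClosed_range_of_continuous hc⟩

end AntilipschitzWith

theorem IsLocalHomeomorph.isCoveringMap_of_isClosedEmbedding {E X : Type*} [TopologicalSpace E]
    [TopologicalSpace X] [T2Space E] {f : E → X} (hf : IsLocalHomeomorph f)
    (hcl : IsClosedEmbedding f) : IsCoveringMap f :=
  isCoveringMap_iff_isCoveringMapOn_univ.2 <|
    hcl.isClosedMap.isCoveringMapOn_of_isLocalHomeomorphOn
      (fun _ _ => (subsingleton_singleton.preimage hcl.injective).finite)
      (isLocalHomeomorph_iff_isLocalHomeomorphOn_univ.1 hf)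

theorem surjective_of_isOpenMap_of_isClosedMap {X Y : Type*} [TopologicalSpace X]
    [TopologicalSpace Y] [Nonempty X] [ConnectedSpace Y] {f : X → Y} (hopen : IsOpenMap f)
    (hclosed : IsClosedMap f) : Surjective f :=
  range_eq_univ.1 <|
    IsClopen.eq_univ ⟨hclosed.isClosed_range, hopen.isOpen_range⟩ (range_nonempty f)

/-- The engine of **Lemma 1**: a distance-increasing local homeomorphism from a nonempty complete
metric space to the Euclidean plane is a covering map; in particular, if the source is connected
it is a homeomorphism onto `ℝ²`. -/
theorem distance_increasing_is_covering (X : Type) [MetricSpace X] [CompleteSpace X]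
    [Nonempty X] (f : X → EuclideanSpace ℝ (Fin 2))
    (hloc : IsLocalHomeomorph f)
    (hdist : ∀ x y : X, dist x y ≤ dist (f x) (f y)) :
    IsCoveringMap f ∧
      (ConnectedSpace X → ∃ e : X ≃ₜ EuclideanSpace ℝ (Fin 2), ⇑e = f) := by
  have hanti : AntilipschitzWith 1 f :=
    .of_le_mul_dist fun x y => by simpa only [NNReal.coe_one, one_mul] using hdist x y
  have hemb : IsClosedEmbedding f := hanti.isClosedEmbedding_of_continuous hloc.continuous
  have hsurj : Surjective f :=
    surjective_of_isOpenMap_of_isClosedMap hloc.isOpenMap hemb.isClosedMap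
  exact ⟨hloc.isCoveringMap_of_isClosedEmbedding hemb, fun _ =>
    isHomeomorph_iff_exists_homeomorph.1 (isHomeomorph_iff_isEmbedding_surjective.2
      ⟨hemb.isEmbedding, hsurj⟩)⟩
end

section
/- Let S ⊆ ℝ³ be a strictly spacelike entire graph and let f(x) = Ax + b be an affine isometry of 3-dimensional Minkowski space whose linear part A fixes the vector (0,0,1) and restricts to a rotation (an element of SO(2)) of the plane spanned by the first two coordinates. If f(S) = S and f has no fixed point in S, then A is the identity. (The elliptic case of Proposition 7: a spacelike torus with linear holonomy in SO(2) has trivial linear holonomy.) -/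
lemma eq_of_mem_range_graph {h : EuclideanSpace ℝ (Fin 2) → ℝ} {x y : Fin 3 → ℝ}
    (hx : x ∈ Set.range fun p : EuclideanSpace ℝ (Fin 2) => ![p 0, p 1, h p])
    (hy : y ∈ Set.range fun p : EuclideanSpace ℝ (Fin 2) => ![p 0, p 1, h p])
    (h0 : x 0 = y 0) (h1 : x 1 = y 1) : x = y := by
  obtain ⟨p, rfl⟩ := hx
  obtain ⟨q, rfl⟩ := hy
  have hpq : p = q := by
    ext i
    fin_cases i
    · simpa using h0
    · simpa using h1
  rw [hpq]

lemma map_apply_of_rotation {F : Type*} [FunLike F (Fin 3 → ℝ) (Fin 3 → ℝ)]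
    [LinearMapClass F ℝ (Fin 3 → ℝ) (Fin 3 → ℝ)] (L : F) {c s : ℝ}
    (h0 : L ![1, 0, 0] = ![c, s, 0]) (h1 : L ![0, 1, 0] = ![-s, c, 0])
    (h2 : L ![0, 0, 1] = ![0, 0, 1]) (x : Fin 3 → ℝ) :
    L x = ![x 0 * c - x 1 * s, x 0 * s + x 1 * c, x 2] := by
  have hx : x = x 0 • ![(1 : ℝ), 0, 0] + x 1 • ![0, 1, 0] + x 2 • ![0, 0, 1] := by
    ext i; fin_cases i <;> simp
  rw [hx, map_add, map_add, map_smul, map_smul, map_smul, h0, h1, h2]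
  ext i; fin_cases i <;> simp [sub_eq_add_neg, mul_comm]

lemma exists_fixed_rotation_add {c s : ℝ} (hc : c ≠ 1) (b₀ b₁ : ℝ) :
    ∃ p₀ p₁ : ℝ, p₀ * c - p₁ * s + b₀ = p₀ ∧ p₀ * s + p₁ * c + b₁ = p₁ := by
  have hd : (1 - c) ^ 2 + s ^ 2 ≠ 0 := by
    have : 0 < (1 - c) ^ 2 := pow_two_pos_of_ne_zero (sub_ne_zero.mpr hc.symm)
    positivity
  refine ⟨((1 - c) * b₀ - s * b₁) / ((1 - c) ^ 2 + s ^ 2),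
    (s * b₀ + (1 - c) * b₁) / ((1 - c) ^ 2 + s ^ 2), ?_, ?_⟩ <;>
  · field_simp; ring

theorem elliptic_linear_holonomy_trivial_general (S : Set (Fin 3 → ℝ))
    (hS : IsStrictlySpacelikeGraph S)
    (f : (Fin 3 → ℝ) ≃ᵃ[ℝ] (Fin 3 → ℝ))
    (hfix : f.linear ![0, 0, 1] = ![0, 0, 1])
    (hrot : ∃ θ : ℝ,
      f.linear ![1, 0, 0] = ![Real.cos θ, Real.sin θ, 0] ∧
      f.linear ![0, 1, 0] = ![-Real.sin θ, Real.cos θ, 0])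
    (hinv : ⇑f '' S = S)
    (hnofix : ∀ x ∈ S, f x ≠ x) :
    ∀ v : Fin 3 → ℝ, f.linear v = v := by
  obtain ⟨h, -, rfl⟩ := hS
  obtain ⟨θ, h0, h1⟩ := hrot
  have hL := map_apply_of_rotation f.linear h0 h1 hfix
  have hf (x : Fin 3 → ℝ) : f x = f.linear x + f 0 := by simpa using f.map_vadd 0 x
  have hcos : Real.cos θ = 1 := by
    by_contra hne
    obtain ⟨p₀, p₁, hp₀, hp₁⟩ := exists_fixed_rotation_add hne (f 0 0) (f 0 1)
    set x : Fin 3 → ℝ := ![p₀, p₁, h !₂[p₀, p₁]]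
    have hx : x ∈ Set.range fun p : EuclideanSpace ℝ (Fin 2) => ![p 0, p 1, h p] :=
      ⟨!₂[p₀, p₁], by ext i; fin_cases i <;> rfl⟩
    refine hnofix x hx (eq_of_mem_range_graph (hinv ▸ Set.mem_image_of_mem f hx) hx ?_ ?_)
    · rw [hf, Pi.add_apply, hL]; simpa [x] using hp₀
    · rw [hf, Pi.add_apply, hL]; simpa [x] using hp₁
  have hsin : Real.sin θ = 0 := by nlinarith [Real.sin_sq_add_cos_sq θ]
  intro v
  rw [hL, hcos, hsin]
  ext i; fin_cases i <;> simp

/-- The elliptic case of **Proposition 7**: if an affine isometry `f` of Minkowski space whose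
linear part fixes `(0,0,1)` and acts as a rotation of the spacelike coordinate plane preserves
a strictly spacelike entire graph `S` and has no fixed point on `S`, then its linear part is
the identity. -/
theorem elliptic_linear_holonomy_trivial (S : Set (Fin 3 → ℝ))
    (hS : IsStrictlySpacelikeGraph S)
    (f : (Fin 3 → ℝ) ≃ᵃ[ℝ] (Fin 3 → ℝ))
    (hiso : ∀ x y : Fin 3 → ℝ, mQ (f x - f y) = mQ (x - y))
    (hfix : f.linear ![0, 0, 1] = ![0, 0, 1])
    (hrot : ∃ θ : ℝ,
      f.linear ![1, 0, 0] = ![Real.cos θ, Real.sin θ, 0] ∧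
      f.linear ![0, 1, 0] = ![-Real.sin θ, Real.cos θ, 0])
    (hinv : ⇑f '' S = S)
    (hnofix : ∀ x ∈ S, f x ≠ x) :
    ∀ v : Fin 3 → ℝ, f.linear v = v :=
  elliptic_linear_holonomy_trivial_general S hS f hfix hrot hinv hnofix
end

section
/- For λ, e ∈ ℝ let T(λ, e) be the affine isometry of 3-dimensional Minkowski space given by (x, y, t) ↦ (x cosh λ + t sinh λ, y + e, x sinh λ + t cosh λ). Let (λ, e) and (μ, f) be linearly independent vectors in ℝ² with (λ, μ) ≠ (0, 0), let Γ be the group generated by A = T(λ, e) and B = T(μ, f), and let S be a strictly spacelike entire graph such that γ(S) = S for all γ ∈ Γ and the action of Γ on S is cocompact (there is a compact K ⊆ S with Γ·K = S). Then t² − x² > 0 at every point (x, y, t) of S, and t has constant sign on S. (The core of Proposition 8: a spacelike torus with hyperbolic linear holonomy develops into a standard region {t² > x², t > 0} up to time reversal.) -/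
/-- The affine isometry `T(λ, e) : (x, y, t) ↦ (x cosh λ + t sinh λ, y + e, x sinh λ + t cosh λ)`
of Minkowski space, as a map. -/
noncomputable def TM (l e : ℝ) : (Fin 3 → ℝ) → (Fin 3 → ℝ) := fun v =>
  ![v 0 * Real.cosh l + v 2 * Real.sinh l, v 1 + e, v 0 * Real.sinh l + v 2 * Real.cosh l]

/-- `T(λ, e)` as a bijection of `ℝ³` (with inverse `T(−λ, −e)`). -/
noncomputable def TE (l e : ℝ) : Equiv.Perm (Fin 3 → ℝ) where
  toFun := TM l e
  invFun := TM (-l) (-e)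
  left_inv := by
    intro v
    have h := Real.cosh_sq_sub_sinh_sq l
    funext i
    fin_cases i
    · simp [TM]; linear_combination (v 0) * h
    · simp [TM]
    · simp [TM]; linear_combination (v 2) * h
  right_inv := by
    intro v
    have h := Real.cosh_sq_sub_sinh_sq l
    funext i
    fin_cases i
    · simp [TM]; linear_combination (v 0) * h
    · simp [TM]
    · simp [TM]; linear_combination (v 2) * h

/-!
Invariance under a single boost `T(λ, e)` with `λ ≠ 0` already forces `x² ≤ t²` on `S`. If a point
`p ∈ S` had `δ = x² − t² > 0`, then `Q(Tⁿp − p) = (ne)² − 2δ(cosh(nλ) − 1)` would become negative for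
large `n`, while two distinct points of a strictly spacelike graph have spacelike separation.
Equality `x² = t²` at some point is then impossible: moving one unit in `x` away from the origin
increases `|x|` by exactly one but changes `t` by less than one. Finally `t` never vanishes on the
connected surface `S`, so it has constant sign.
-/

open Set Real

lemma TM_TM (a b c d : ℝ) (v : Fin 3 → ℝ) : TM a b (TM c d v) = TM (a + c) (b + d) v := by
  funext i
  fin_cases i <;> simp [TM, cosh_add, sinh_add] <;> ring

lemma TM_iterate (l e : ℝ) (n : ℕ) : (TM l e)^[n] = TM (n * l) (n * e) := by
  induction n with
  | zero => funext v i; fin_cases i <;> simp [TM]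
  | succ n ih =>
    funext v
    rw [Function.iterate_succ_apply', ih, TM_TM]
    push_cast
    ring_nf

lemma mQ_TM_sub_self (l e : ℝ) (p : Fin 3 → ℝ) :
    mQ (TM l e p - p) = e ^ 2 - 2 * (p 0 ^ 2 - p 2 ^ 2) * (cosh l - 1) := by
  simp only [mQ, mB, TM, Pi.sub_apply, Matrix.cons_val_zero, Matrix.cons_val_one,
    Matrix.cons_val_two, Matrix.head_cons, Matrix.tail_cons]
  linear_combination (p 0 ^ 2 - p 2 ^ 2) * cosh_sq_sub_sinh_sq l

lemma quartic_div_le_cosh (x : ℝ) : x ^ 4 / 48 ≤ cosh x := by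
  have hexp : |x| ^ 4 / 24 ≤ exp |x| := by
    simpa [Nat.factorial] using pow_div_factorial_le_exp |x| (abs_nonneg x) 4
  have hcosh : exp |x| ≤ 2 * cosh x := by
    rw [← cosh_abs, cosh_eq]
    linarith [exp_pos (-|x|)]
  rw [(by decide : Even 4).pow_abs] at hexp
  linarith

lemma exists_nat_mul_sq_lt_cosh_sub_one {l : ℝ} (hl : l ≠ 0) (C : ℝ) :
    ∃ n : ℕ, C * n ^ 2 < cosh (n * l) - 1 := by
  have hl4 : 0 < l ^ 4 := by positivity
  obtain ⟨N, hN⟩ := exists_nat_gt (48 * (|C| + 1) / l ^ 4)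
  refine ⟨N + 1, ?_⟩
  set n : ℝ := ((N + 1 : ℕ) : ℝ)
  have hn : 1 ≤ n := by simp [n]
  have hnl : 48 * (|C| + 1) < n * l ^ 4 := by
    rw [div_lt_iff₀ hl4] at hN
    have : (N : ℝ) ≤ n := by simp [n]
    nlinarith
  have hcosh := quartic_div_le_cosh (n * l)
  have hn3 : n ^ 2 ≤ n ^ 3 := by nlinarith
  calc C * n ^ 2 ≤ |C| * n ^ 2 := by gcongr; exact le_abs_self C
    _ ≤ (|C| + 1) * n ^ 3 - 1 := by nlinarith [abs_nonneg C]
    _ < n ^ 3 * (n * l ^ 4) / 48 - 1 := by nlinarith [pow_pos (by positivity : (0 : ℝ) < n) 3]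
    _ = (n * l) ^ 4 / 48 - 1 := by ring
    _ ≤ cosh (n * l) - 1 := by linarith

lemma IsPreconnected.pos_or_neg {X : Type*} [TopologicalSpace X] {s : Set X}
    (hs : IsPreconnected s) {f : X → ℝ} (hf : ContinuousOn f s) (hf0 : ∀ x ∈ s, f x ≠ 0) :
    (∀ x ∈ s, 0 < f x) ∨ (∀ x ∈ s, f x < 0) := by
  by_contra! h
  obtain ⟨⟨a, ha, hfa⟩, ⟨b, hb, hfb⟩⟩ := h
  obtain ⟨x, hx, hfx⟩ := hs.intermediate_value ha hb hf ⟨hfa, hfb⟩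
  exact hf0 x hx hfx

namespace IsStrictlySpacelikeGraph

variable {S : Set (Fin 3 → ℝ)}

lemma exists_mem (hS : IsStrictlySpacelikeGraph S) (x y : ℝ) : ∃ t, ![x, y, t] ∈ S := by
  obtain ⟨h, -, rfl⟩ := hS
  exact ⟨h !₂[x, y], !₂[x, y], rfl⟩

lemma mQ_sub_pos (hS : IsStrictlySpacelikeGraph S) {p q : Fin 3 → ℝ} (hp : p ∈ S) (hq : q ∈ S)
    (hpq : p ≠ q) : 0 < mQ (p - q) := by
  obtain ⟨h, hlip, rfl⟩ := hS
  obtain ⟨P, rfl⟩ := hp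
  obtain ⟨Q, rfl⟩ := hq
  have hPQ : P ≠ Q := by rintro rfl; exact hpq rfl
  have hdist : dist P Q ^ 2 = (P 0 - Q 0) ^ 2 + (P 1 - Q 1) ^ 2 := by
    rw [EuclideanSpace.dist_eq, sq_sqrt (by positivity), Fin.sum_univ_two, Real.dist_eq,
      Real.dist_eq, sq_abs, sq_abs]
  have hlt : (h P - h Q) ^ 2 < dist P Q ^ 2 := by
    rw [← sq_abs]
    exact pow_lt_pow_left₀ (hlip P Q hPQ) (abs_nonneg _) two_ne_zero
  simp only [mQ, mB, Pi.sub_apply, Matrix.cons_val_zero, Matrix.cons_val_one,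
    Matrix.cons_val_two, Matrix.head_cons, Matrix.tail_cons]
  nlinarith

lemma isPreconnected (hS : IsStrictlySpacelikeGraph S) : IsPreconnected S := by
  obtain ⟨h, hlip, rfl⟩ := hS
  have hh : LipschitzWith 1 h := LipschitzWith.of_dist_le_mul fun P Q => by
    rcases eq_or_ne P Q with rfl | hPQ
    · simp
    · simpa [Real.dist_eq] using (hlip P Q hPQ).le
  refine (isConnected_range ?_).isPreconnected
  refine continuous_pi fun i => ?_
  fin_cases i
  · exact (EuclideanSpace.proj 0 : EuclideanSpace ℝ (Fin 2) →L[ℝ] ℝ).continuous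
  · exact (EuclideanSpace.proj 1 : EuclideanSpace ℝ (Fin 2) →L[ℝ] ℝ).continuous
  · exact hh.continuous

lemma sq_le_sq_of_mapsTo_TM (hS : IsStrictlySpacelikeGraph S) {l e : ℝ} (hl : l ≠ 0)
    (hmaps : MapsTo (TM l e) S S) : ∀ p ∈ S, p 0 ^ 2 ≤ p 2 ^ 2 := by
  intro p hp
  by_contra! hlt
  have hδ : 0 < p 0 ^ 2 - p 2 ^ 2 := sub_pos.2 hlt
  obtain ⟨n, hn⟩ := exists_nat_mul_sq_lt_cosh_sub_one hl (e ^ 2 / (p 0 ^ 2 - p 2 ^ 2))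
  set q := TM (n * l) (n * e) p
  have hq : q ∈ S := by simpa only [TM_iterate] using hmaps.iterate n hp
  have hneg : mQ (q - p) < 0 := by
    rw [div_mul_eq_mul_div, div_lt_iff₀ hδ] at hn
    rw [mQ_TM_sub_self]
    nlinarith [sq_nonneg ((n : ℝ) * e)]
  have hqp : q ≠ p := by
    intro hqp
    simp [hqp, mQ, mB] at hneg
  exact (hneg.trans (hS.mQ_sub_pos hq hp hqp)).false

lemma sq_lt_sq_of_sq_le_sq (hS : IsStrictlySpacelikeGraph S)
    (hle : ∀ p ∈ S, p 0 ^ 2 ≤ p 2 ^ 2) : ∀ p ∈ S, p 0 ^ 2 < p 2 ^ 2 := by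
  intro p hp
  refine (hle p hp).lt_of_ne fun heq => ?_
  obtain ⟨σ, hσ, hσp⟩ : ∃ σ : ℝ, |σ| = 1 ∧ |p 0 + σ| = |p 0| + 1 := by
    rcases le_total 0 (p 0) with h0 | h0
    · exact ⟨1, by simp, by rw [abs_of_nonneg h0, abs_of_nonneg (by linarith)]⟩
    · exact ⟨-1, by simp, by rw [abs_of_nonpos h0, abs_of_nonpos (by linarith)]; ring⟩
  obtain ⟨t, ht⟩ := hS.exists_mem (p 0 + σ) (p 1)
  have hp_ne : ![p 0 + σ, p 1, t] ≠ p := fun h => by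
    have := congrFun h 0
    simp only [Matrix.cons_val_zero, add_eq_left] at this
    simp [this] at hσ
  have hspacelike := hS.mQ_sub_pos ht hp hp_ne
  simp only [mQ, mB, Pi.sub_apply, Matrix.cons_val_zero, Matrix.cons_val_one,
    Matrix.cons_val_two, Matrix.head_cons, Matrix.tail_cons] at hspacelike
  have hdt : |t - p 2| < 1 := by
    rw [← sq_lt_one_iff_abs_lt_one]
    nlinarith [sq_abs σ]
  have habs : |p 2| = |p 0| := (sq_eq_sq_iff_abs_eq_abs _ _).1 heq.symm
  have ht_lt : |t| < |p 0 + σ| := by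
    calc |t| ≤ |p 2| + |t - p 2| := by simpa using abs_add_le (p 2) (t - p 2)
      _ < |p 0 + σ| := by rw [habs, hσp]; linarith
  have := hle _ ht
  simp only [Matrix.cons_val_zero, Matrix.cons_val_two, Matrix.tail_cons,
    Matrix.head_cons] at this
  exact (sq_lt_sq.2 ht_lt).not_ge (by simpa [sq_abs] using this)

end IsStrictlySpacelikeGraph

theorem hyperbolic_holonomy_standard_region_general (l e m f : ℝ)
    (hlm : (l, m) ≠ ((0 : ℝ), (0 : ℝ)))
    (S : Set (Fin 3 → ℝ)) (hS : IsStrictlySpacelikeGraph S)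
    (hinv : ∀ γ ∈ Subgroup.closure {TE l e, TE m f}, ⇑γ '' S = S) :
    (∀ p ∈ S, 0 < (p 2) ^ 2 - (p 0) ^ 2) ∧
      ((∀ p ∈ S, 0 < p 2) ∨ (∀ p ∈ S, p 2 < 0)) := by
  have hmaps : ∀ γ ∈ Subgroup.closure {TE l e, TE m f}, MapsTo γ S S :=
    fun γ hγ => mapsTo_iff_image_subset.2 (hinv γ hγ).le
  have hle : ∀ p ∈ S, p 0 ^ 2 ≤ p 2 ^ 2 := by
    by_cases hl : l = 0
    · have hm : m ≠ 0 := fun hm => hlm (by rw [hl, hm])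
      exact hS.sq_le_sq_of_mapsTo_TM hm
        (hmaps _ (Subgroup.subset_closure (mem_insert_of_mem _ rfl)))
    · exact hS.sq_le_sq_of_mapsTo_TM hl (hmaps _ (Subgroup.subset_closure (mem_insert _ _)))
  have hlt := hS.sq_lt_sq_of_sq_le_sq hle
  refine ⟨fun p hp => sub_pos.2 (hlt p hp), ?_⟩
  exact hS.isPreconnected.pos_or_neg (continuous_apply 2).continuousOn fun p hp h0 =>
    (hlt p hp).not_ge (by simp [h0, sq_nonneg])

/-- The core of **Proposition 8**: if `(λ,e)` and `(μ,f)` are linearly independent in `ℝ²`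
with `(λ,μ) ≠ (0,0)`, and the group `Γ` generated by `A = T(λ,e)` and `B = T(μ,f)` preserves
a strictly spacelike entire graph `S` and acts cocompactly on it, then `t² − x² > 0` at every
point of `S` and `t` has constant sign on `S`. -/
theorem hyperbolic_holonomy_standard_region (l e m f : ℝ)
    (hli : LinearIndependent ℝ ![![l, e], ![m, f]])
    (hlm : (l, m) ≠ ((0 : ℝ), (0 : ℝ)))
    (S : Set (Fin 3 → ℝ)) (hS : IsStrictlySpacelikeGraph S)
    (hinv : ∀ γ ∈ Subgroup.closure {TE l e, TE m f}, ⇑γ '' S = S)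
    (K : Set (Fin 3 → ℝ)) (hK : IsCompact K) (hKS : K ⊆ S)
    (hcocompact : ∀ x ∈ S, ∃ γ ∈ Subgroup.closure {TE l e, TE m f}, ∃ k ∈ K, γ k = x) :
    (∀ p ∈ S, 0 < (p 2) ^ 2 - (p 0) ^ 2) ∧
      ((∀ p ∈ S, 0 < p 2) ∨ (∀ p ∈ S, p 2 < 0)) :=
  hyperbolic_holonomy_standard_region_general l e m f hlm S hS hinv
end

section
/- Let T be a linear automorphism of the space of 2×2 real matrices such that det(T(X)) = det(X) for all X. Then there exist A, B ∈ GL₂(ℝ) with det(A)·det(B) = 1 such that either T(X) = A X B for all X, or T(X) = A Xᵀ B for all X. (The structure of the automorphism group of the quadric AD − BC = 0 asserted in Section 7: the determinant-preserving linear maps form the group generated by left/right multiplications and transposition.) -/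
/-!
Multiplying on the left by `(T 1)⁻¹`, which has determinant `1`, reduces to the case `T 1 = 1`.
Then `T` also preserves traces, because `det (X + 1) = det X + tr X + 1`, so it maps the
nilpotents `E₀₁`, `E₁₀` to nonzero nilpotents; the relation `det (E₀₁ + E₁₀) = -1` lets one
conjugate both back at once. Once `1`, `E₀₁`, `E₁₀` are fixed, the determinants of `E₀₀ + E₀₁`
and `E₀₀ + E₁₀` force `T E₀₀ ∈ {E₀₀, E₁₁}`, and `T` is the identity or `X ↦ w Xᵀ w` with `w` the swap matrix.
-/

open Matrix

local notation "M₂(" K ")" => Matrix (Fin 2) (Fin 2) K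

section Sandwich

variable {n R : Type*} [Fintype n] [DecidableEq n] [Semiring R]

def IsSandwich (f : Matrix n n R → Matrix n n R) : Prop :=
  ∃ A B : (Matrix n n R)ˣ, (∀ X, f X = A * X * B) ∨ (∀ X, f X = A * Xᵀ * B)

theorem IsSandwich.of_eq_mul_mul {f g : Matrix n n R → Matrix n n R} (hg : IsSandwich g)
    (A B : (Matrix n n R)ˣ) (hf : ∀ X, f X = A * g X * B) : IsSandwich f := by
  obtain ⟨C, D, h | h⟩ := hg
  · exact ⟨A * C, D * B, Or.inl fun X => by simp [hf, h, mul_assoc]⟩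
  · exact ⟨A * C, D * B, Or.inr fun X => by simp [hf, h, mul_assoc]⟩

end Sandwich

section CommRing

variable {R : Type*} [CommRing R]

theorem det_add_one_fin_two (X : M₂(R)) :
    (X + 1).det = X.det + X.trace + 1 := by
  simp only [det_fin_two, trace_fin_two, Matrix.add_apply, one_apply_eq, one_apply_ne, ne_eq,
    zero_ne_one, one_ne_zero, not_false_eq_true, add_zero]
  ring

theorem trace_map_eq_of_det_map_eq (S : M₂(R) →ₗ[R] M₂(R))
    (hdet : ∀ X, (S X).det = X.det) (h1 : S 1 = 1) (X : M₂(R)) :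
    (S X).trace = X.trace := by
  have h := hdet (X + 1)
  rw [map_add, h1, det_add_one_fin_two, det_add_one_fin_two, hdet] at h
  linear_combination h

theorem exists_units_commute_single_and_mul_eq_mul_single {N : M₂(R)}
    (htr : N.trace = 0) (hdet : N.det = 0) (hdetE : (single 0 1 1 + N).det = -1) :
    ∃ U : M₂(R)ˣ, single 0 1 1 * (U : M₂(R)) = (U : M₂(R)) * single 0 1 1 ∧
      N * (U : M₂(R)) = (U : M₂(R)) * single 1 0 1 := by
  obtain ⟨x, y, z, u, rfl⟩ : ∃ x y z u : R, N = !![x, y; z, u] := ⟨_, _, _, _, eta_fin_two N⟩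
  rw [trace_fin_two_of] at htr
  rw [det_fin_two_of] at hdet
  simp only [det_fin_two, Matrix.add_apply, single_apply_same, single_apply_of_ne, of_apply,
    cons_val', cons_val_zero, cons_val_one, cons_val_fin_one, zero_ne_one, one_ne_zero,
    and_true, and_false, and_self, not_false_eq_true, zero_add] at hdetE
  obtain rfl : u = -x := by linear_combination htr
  obtain rfl : z = 1 := by linear_combination hdet - hdetE
  obtain rfl : y = -(x * x) := by linear_combination -hdet
  have hU : IsUnit !![1, x; 0, (1 : R)] := by simp [isUnit_iff_isUnit_det, det_fin_two_of]
  refine ⟨hU.unit, ?_, ?_⟩ <;> rw [IsUnit.unit_spec] <;>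
    ext i j <;> fin_cases i <;> fin_cases j <;> simp [mul_apply]

theorem map_single_zero_zero_eq_or [NoZeroDivisors R]
    (S : M₂(R) →ₗ[R] M₂(R)) (hdet : ∀ X, (S X).det = X.det) (h1 : S 1 = 1)
    (hE : S (single 0 1 1) = single 0 1 1) (hF : S (single 1 0 1) = single 1 0 1) :
    S (single 0 0 1) = single 0 0 1 ∨ S (single 0 0 1) = single 1 1 1 := by
  obtain ⟨a, b, c, d, hS⟩ : ∃ a b c d : R, S (single 0 0 1) = !![a, b; c, d] :=
    ⟨_, _, _, _, eta_fin_two _⟩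
  have htr := trace_map_eq_of_det_map_eq S hdet h1 (single 0 0 1)
  have hd := hdet (single 0 0 1)
  have hdE := hdet (single 0 0 1 + single 0 1 1)
  have hdF := hdet (single 0 0 1 + single 1 0 1)
  rw [map_add, hE, hS] at hdE
  rw [map_add, hF, hS] at hdF
  rw [hS] at htr hd
  simp only [det_fin_two, trace_fin_two, trace_single_eq_same, Matrix.add_apply, single_apply_same,
    single_apply_of_ne, of_apply, cons_val', cons_val_zero, cons_val_one, cons_val_fin_one,
    zero_ne_one, one_ne_zero, and_true, and_false, and_self, not_false_eq_true, add_zero, zero_add,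
    mul_zero, mul_one, sub_self] at htr hd hdE hdF
  obtain rfl : c = 0 := by linear_combination hd - hdE
  obtain rfl : b = 0 := by linear_combination hd - hdF
  obtain rfl : d = 1 - a := by linear_combination htr
  have ha : a * (1 - a) = 0 := by linear_combination hd
  rcases mul_eq_zero.mp ha with rfl | ha
  · right
    rw [hS]; ext i j; fin_cases i <;> fin_cases j <;> simp
  · obtain rfl : a = 1 := by linear_combination -ha
    left
    rw [hS]; ext i j; fin_cases i <;> fin_cases j <;> simp

theorem single_zero_zero_add_single_one_one :
    single 0 0 1 + single 1 1 1 = (1 : M₂(R)) := by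
  ext i j; fin_cases i <;> fin_cases j <;> simp

theorem isSandwich_of_map_one_single_eq [NoZeroDivisors R]
    (S : M₂(R) →ₗ[R] M₂(R)) (hdet : ∀ X, (S X).det = X.det) (h1 : S 1 = 1)
    (hE : S (single 0 1 1) = single 0 1 1) (hF : S (single 1 0 1) = single 1 0 1) :
    IsSandwich S := by
  have h11 : S (single 1 1 1) = 1 - S (single 0 0 1) := by
    rw [← h1, ← single_zero_zero_add_single_one_one, map_add, add_sub_cancel_left]
  rcases map_single_zero_zero_eq_or S hdet h1 hE hF with h00 | h00
  · have hS : S = LinearMap.id := by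
      refine ext_linearMap R fun i j => LinearMap.ext_ring ?_
      fin_cases i <;> fin_cases j <;> simp [h00, h11, hE, hF, ← single_zero_zero_add_single_one_one]
    exact ⟨1, 1, Or.inl fun X => by simp [hS]⟩
  · have hw : !![0, 1; 1, 0] * !![0, 1; 1, (0 : R)] = 1 := by
      simp [one_fin_two]
    let w : M₂(R)ˣ := ⟨!![0, 1; 1, 0], !![0, 1; 1, 0], hw, hw⟩
    have hS : S = LinearMap.mulLeftRight R ((w : M₂(R)), (w : M₂(R))) ∘ₗ
        (transposeLinearEquiv (Fin 2) (Fin 2) R R).toLinearMap := by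
      refine ext_linearMap R fun i j => LinearMap.ext_ring ?_
      fin_cases i <;> fin_cases j <;>
        simp [h00, h11, hE, hF, w, ← single_zero_zero_add_single_one_one, ← Matrix.ext_iff,
          Fin.forall_fin_two, vecMul, dotProduct, mul_apply, Fin.sum_univ_two]
    exact ⟨w, w, Or.inr fun X => by simp [hS]⟩

end CommRing

section Field

variable {K : Type*} [Field K]

theorem exists_units_mul_eq_mul_single_zero_one {N : M₂(K)} (hN : N ≠ 0)
    (htr : N.trace = 0) (hdet : N.det = 0) :
    ∃ P : M₂(K)ˣ, N * (P : M₂(K)) = (P : M₂(K)) * single 0 1 1 := by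
  obtain ⟨a, b, c, d, rfl⟩ : ∃ a b c d : K, N = !![a, b; c, d] := ⟨_, _, _, _, eta_fin_two N⟩
  rw [trace_fin_two_of] at htr
  rw [det_fin_two_of] at hdet
  obtain rfl : d = -a := by linear_combination htr
  by_cases hc : c = 0
  · subst hc
    obtain rfl : a = 0 := by simpa using hdet
    have hb : b ≠ 0 := by rintro rfl; exact hN (by simp [← Matrix.ext_iff, Fin.forall_fin_two])
    have hP : IsUnit !![b, 0; 0, (1 : K)] := by
      simp [isUnit_iff_isUnit_det, det_fin_two_of, hb]
    refine ⟨hP.unit, ?_⟩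
    rw [IsUnit.unit_spec]
    ext i j; fin_cases i <;> fin_cases j <;> simp [mul_apply]
  · have hbc : b * c = -(a * a) := by linear_combination -hdet
    -- the columns of `P` are `N e₀` and `e₀`, and `N ^ 2 = 0`
    have hP : IsUnit !![a, 1; c, (0 : K)] := by
      simp [isUnit_iff_isUnit_det, det_fin_two_of, hc]
    refine ⟨hP.unit, ?_⟩
    rw [IsUnit.unit_spec]
    ext i j; fin_cases i <;> fin_cases j <;> simp [mul_apply, hbc, mul_comm]

theorem exists_units_map_single_mul_eq_mul_single (S : M₂(K) →ₗ[K] M₂(K))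
    (hdet : ∀ X, (S X).det = X.det) (h1 : S 1 = 1) :
    ∃ P : M₂(K)ˣ, S (single 0 1 1) * (P : M₂(K)) = (P : M₂(K)) * single 0 1 1 ∧
      S (single 1 0 1) * (P : M₂(K)) = (P : M₂(K)) * single 1 0 1 := by
  have htr := trace_map_eq_of_det_map_eq S hdet h1
  have hdetEF : (S (single 0 1 1) + S (single 1 0 1)).det = -1 := by
    rw [← map_add, hdet]; simp [det_fin_two]
  have hSE : S (single 0 1 1) ≠ 0 := by
    intro h; rw [h, zero_add, hdet] at hdetEF; simp [det_fin_two] at hdetEF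
  obtain ⟨P, hP⟩ := exists_units_mul_eq_mul_single_zero_one hSE (by simp [htr])
    (by simp [hdet, det_fin_two])
  have hconjE : single 0 1 1 = (↑P⁻¹ : M₂(K)) * S (single 0 1 1) * (P : M₂(K)) := by
    rw [mul_assoc, hP, Units.inv_mul_cancel_left]
  obtain ⟨U, hUE, hUF⟩ := exists_units_commute_single_and_mul_eq_mul_single
    (N := (↑P⁻¹ : M₂(K)) * S (single 1 0 1) * (P : M₂(K))) (by rw [trace_units_conj', htr]; simp)
    (by rw [det_units_conj', hdet]; simp [det_fin_two])
    (by rw [hconjE, ← add_mul, ← mul_add, det_units_conj', hdetEF])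
  refine ⟨P * U, ?_, ?_⟩
  · rw [Units.val_mul, ← mul_assoc, hP, mul_assoc, hUE, mul_assoc]
  · calc S (single 1 0 1) * ↑(P * U) = (P : M₂(K)) * (↑P⁻¹ * S (single 1 0 1) * P * U) := by
          simp [mul_assoc]
      _ = ↑(P * U) * single 1 0 1 := by rw [hUF, Units.val_mul, mul_assoc]

theorem isSandwich_of_map_one (S : M₂(K) →ₗ[K] M₂(K)) (hdet : ∀ X, (S X).det = X.det)
    (h1 : S 1 = 1) : IsSandwich S := by
  obtain ⟨P, hE, hF⟩ := exists_units_map_single_mul_eq_mul_single S hdet h1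
  have hS' := isSandwich_of_map_one_single_eq
    (LinearMap.mulLeftRight K ((↑P⁻¹ : M₂(K)), (P : M₂(K))) ∘ₗ S)
    (fun X => by rw [LinearMap.comp_apply, LinearMap.mulLeftRight_apply, det_units_conj', hdet])
    (by simp [h1]) (by simp [mul_assoc, hE])
    (by simp [mul_assoc, hF])
  exact hS'.of_eq_mul_mul P P⁻¹ fun X => by simp [mul_assoc]

theorem isSandwich_of_det_map_eq (S : M₂(K) →ₗ[K] M₂(K)) (hdet : ∀ X, (S X).det = X.det) :
    IsSandwich S := by
  obtain ⟨U, hU⟩ : IsUnit (S 1) := by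
    rw [isUnit_iff_isUnit_det, hdet, det_one]; exact isUnit_one
  have hdetU : (U : M₂(K)).det = 1 := by rw [hU, hdet, det_one]
  have hS' := isSandwich_of_map_one (LinearMap.mulLeft K (↑U⁻¹ : M₂(K)) ∘ₗ S)
    (by simp [det_mul, hdet, hdetU]) (by simp [← hU])
  exact hS'.of_eq_mul_mul U 1 fun X => by simp

end Field

/-- The structure of the automorphism group of the quadric `AD − BC = 0` (Section 7): every
linear automorphism `T` of `M₂(ℝ)` preserving the determinant is of the form `X ↦ A X B` or
`X ↦ A Xᵀ B` for invertible matrices `A, B` with `det A · det B = 1`. -/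
theorem det_preserving_linear_map_structure
    (T : Matrix (Fin 2) (Fin 2) ℝ ≃ₗ[ℝ] Matrix (Fin 2) (Fin 2) ℝ)
    (hdet : ∀ X : Matrix (Fin 2) (Fin 2) ℝ, (T X).det = X.det) :
    ∃ A B : Matrix (Fin 2) (Fin 2) ℝ, IsUnit A ∧ IsUnit B ∧ A.det * B.det = 1 ∧
      ((∀ X, T X = A * X * B) ∨ (∀ X, T X = A * X.transpose * B)) := by
  obtain ⟨A, B, hAB⟩ := isSandwich_of_det_map_eq T.toLinearMap hdet
  refine ⟨A, B, A.isUnit, B.isUnit, ?_, hAB⟩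
  have hT1 : (T 1).det = 1 := by rw [hdet, det_one]
  rcases hAB with h | h <;> simpa [det_mul] using (congrArg det (h 1)).symm.trans hT1
end

section
/- Let S be a strictly spacelike entire graph in 3-dimensional Minkowski space with D(S) ≠ ℝ³ and let X be the frontier of D(S). Suppose X contains two null rays r₁ + ℝ≥₀·v and r₂ + ℝ≥₀·v with the same future-directed null direction v, whose basepoints r₁ ≠ r₂ do not lie on a common line of direction v. Then B(r₁, v) = B(r₂, v), the null plane {x : B(x − r₁, v) = 0} is a supporting plane of D(S) containing both rays, the segment joining r₁ to r₂ is contained in X, and the vector r₂ − r₁ is spacelike. (The geometric core of Proposition 14 on parallel null rays in the boundary of a domain of dependence.) -/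
/-!
Write the graph `S` of the 1-Lipschitz function `h` as the zero set of
`height h x = x₃ - h(x₁, x₂)`. Adding a future causal vector never decreases the height, so
`D(S)` is stable under future causal translations, and no point of the frontier lies in the
chronological future of a point of `closure D(S)`. Comparing a point `x ∈ D(S)` with the far
points `r₁ + t v` of a null ray in the frontier forces `B(x - r₁, v) ≤ 0`; applied to both rays
this gives `B(r₂ - r₁, v) = 0`. A non-timelike vector `B`-orthogonal to the null vector `v` is
spacelike unless it is parallel to `v`. The segment lies on the supporting null plane, hence off
the interior, and it lies in the closure because for every causal direction `u` one of its
endpoints `r` satisfies `B(z - r, u) ≤ 0`.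
-/

open Set Filter Topology

namespace Minkowski

lemma isLinearMap_mB_left (u : Fin 3 → ℝ) : IsLinearMap ℝ (mB · u) :=
  ⟨fun x y => by simp only [mB, Pi.add_apply]; ring,
   fun c x => by simp only [mB, Pi.smul_apply, smul_eq_mul]; ring⟩

lemma mB_add_left (x y u : Fin 3 → ℝ) : mB (x + y) u = mB x u + mB y u :=
  (isLinearMap_mB_left u).map_add x y

lemma mB_smul_left (c : ℝ) (x u : Fin 3 → ℝ) : mB (c • x) u = c * mB x u :=
  (isLinearMap_mB_left u).map_smul c x

lemma mB_sub_left (x y u : Fin 3 → ℝ) : mB (x - y) u = mB x u - mB y u := by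
  simp only [mB, Pi.sub_apply]; ring

lemma mQ_add_smul (w v : Fin 3 → ℝ) (τ : ℝ) :
    mQ (w + τ • v) = mQ w + 2 * τ * mB w v + τ ^ 2 * mQ v := by
  simp only [mQ, mB, Pi.add_apply, Pi.smul_apply, smul_eq_mul]; ring

lemma mQ_neg (w : Fin 3 → ℝ) : mQ (-w) = mQ w := by
  simp only [mQ, mB, Pi.neg_apply]; ring

lemma FutureTimelike.futureCausal {u : Fin 3 → ℝ} (hu : FutureTimelike u) : FutureCausal u :=
  ⟨hu.1.le, hu.2⟩

lemma FutureNull.futureCausal {u : Fin 3 → ℝ} (hu : FutureNull u) : FutureCausal u :=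
  ⟨hu.1.le, hu.2⟩

lemma isOpen_setOf_futureTimelike : IsOpen {u : Fin 3 → ℝ | FutureTimelike u} := by
  have hQ : Continuous mQ := by unfold mQ mB; fun_prop
  exact (isOpen_lt hQ continuous_const).inter (isOpen_lt continuous_const (continuous_apply 2))

def e₃ : Fin 3 → ℝ := ![0, 0, 1]

lemma mB_e₃_left (u : Fin 3 → ℝ) : mB e₃ u = -u 2 := by
  simp [mB, e₃]

lemma futureTimelike_smul_e₃ {η : ℝ} (hη : 0 < η) : FutureTimelike (η • e₃) := by
  refine ⟨?_, by simpa [e₃] using hη⟩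
  simp only [mQ, mB_smul_left, mB_e₃_left]
  simp [e₃]
  positivity

lemma mQ_nonneg_of_not_futureTimelike {w : Fin 3 → ℝ} (hw : ¬ FutureTimelike w)
    (hw' : ¬ FutureTimelike (-w)) : 0 ≤ mQ w := by
  by_contra! hQ
  rcases lt_trichotomy (w 2) 0 with h | h | h
  · exact hw' ⟨by rwa [mQ_neg], by simpa using h⟩
  · simp only [mQ, mB, h] at hQ; nlinarith
  · exact hw ⟨hQ, h⟩

lemma exists_futureTimelike_add_smul {a u : Fin 3 → ℝ} (hu : FutureCausal u)
    (ha : mB a u < 0) : ∃ s : ℝ, 0 ≤ s ∧ FutureTimelike (a + s • u) := by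
  obtain ⟨hQu, hu2⟩ := hu
  set s := |mQ a| / (-2 * mB a u) + |a 2| / u 2 + 1
  have hs₁ : |mQ a| ≤ |mQ a| / (-2 * mB a u) * (-2 * mB a u) :=
    (div_mul_cancel₀ _ (by linarith)).ge
  have hs₂ : |a 2| ≤ |a 2| / u 2 * u 2 := (div_mul_cancel₀ _ hu2.ne').ge
  have h₁ : 0 ≤ |mQ a| / (-2 * mB a u) := div_nonneg (abs_nonneg _) (by linarith)
  have h₂ : 0 ≤ |a 2| / u 2 := div_nonneg (abs_nonneg _) hu2.le
  refine ⟨s, by positivity, ?_, ?_⟩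
  · rw [mQ_add_smul]
    nlinarith [le_abs_self (mQ a), mul_nonneg (sq_nonneg s) (neg_nonneg.2 hQu)]
  · simp only [Pi.add_apply, Pi.smul_apply, smul_eq_mul]
    nlinarith [neg_abs_le (a 2)]

lemma exists_eq_smul_of_mB_eq_zero_of_mQ_eq_zero {v w : Fin 3 → ℝ} (hv : FutureNull v)
    (hB : mB w v = 0) (hQ : mQ w = 0) : ∃ t : ℝ, w = t • v := by
  obtain ⟨hQv, hv2⟩ := hv
  simp only [mQ, mB] at hB hQ hQv
  have hcross : v 0 * w 1 - v 1 * w 0 = 0 := by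
    apply pow_eq_zero_iff two_ne_zero |>.1
    linear_combination (w 0 ^ 2 + w 1 ^ 2) * hQv -
      (v 0 * w 0 + v 1 * w 1 + v 2 * w 2) * hB + v 2 ^ 2 * hQ
  have h₀ : v 2 * w 0 = w 2 * v 0 := mul_left_cancel₀ hv2.ne' <| by
    linear_combination v 0 * hB - v 1 * hcross - w 0 * hQv
  have h₁ : v 2 * w 1 = w 2 * v 1 := mul_left_cancel₀ hv2.ne' <| by
    linear_combination v 1 * hB + v 0 * hcross - w 1 * hQv
  refine ⟨w 2 / v 2, funext fun i => ?_⟩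
  fin_cases i <;> simp <;> field_simp <;> linarith

lemma mB_sub_eq_zero_of_mem_segment {r₁ r₂ v z : Fin 3 → ℝ} (hB : mB r₁ v = mB r₂ v)
    (hz : z ∈ segment ℝ r₁ r₂) : mB (z - r₁) v = 0 := by
  have := (convex_hyperplane (isLinearMap_mB_left v) (mB r₁ v)).segment_subset
    (x := r₁) (y := r₂) rfl hB.symm hz
  rw [mB_sub_left, sub_eq_zero]
  exact this

lemma mB_sub_nonpos_or_of_mem_segment {r₁ r₂ z : Fin 3 → ℝ} (hz : z ∈ segment ℝ r₁ r₂)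
    (u : Fin 3 → ℝ) : mB (z - r₁) u ≤ 0 ∨ mB (z - r₂) u ≤ 0 := by
  have : mB z u ≤ max (mB r₁ u) (mB r₂ u) :=
    (convex_halfSpace_le (isLinearMap_mB_left u) _).segment_subset
      (le_max_left (mB r₁ u) _) (le_max_right _ (mB r₂ u)) hz
  simp only [mB_sub_left, sub_nonpos]
  exact le_max_iff.1 this

lemma notMem_interior_of_mB_sub_eq_zero {D : Set (Fin 3 → ℝ)} {r v z : Fin 3 → ℝ}
    (hD : ∀ x ∈ D, mB (x - r) v ≤ 0) (hv : 0 < v 2) (hz : mB (z - r) v = 0) :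
    z ∉ interior D := by
  intro hint
  have hlim : Tendsto (fun ε : ℝ => z - ε • e₃) (𝓝[>] 0) (𝓝 z) := by
    have : Continuous (fun ε : ℝ => z - ε • e₃) := by fun_prop
    simpa using (this.tendsto 0).mono_left nhdsWithin_le_nhds
  obtain ⟨ε, hεD, hε⟩ :=
    ((hlim.eventually (mem_interior_iff_mem_nhds.1 hint)).and self_mem_nhdsWithin).exists
  have := hD _ hεD
  rw [sub_right_comm, mB_sub_left, hz, mB_smul_left, mB_e₃_left] at this
  nlinarith [mul_pos (show (0:ℝ) < ε from hε) hv]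

def horiz (x : Fin 3 → ℝ) : EuclideanSpace ℝ (Fin 2) := !₂[x 0, x 1]

lemma horiz_add (x y : Fin 3 → ℝ) : horiz (x + y) = horiz x + horiz y := by
  ext i; fin_cases i <;> simp [horiz]

lemma continuous_horiz : Continuous horiz := by
  unfold horiz; fun_prop

lemma mQ_eq_norm_horiz_sq (x : Fin 3 → ℝ) : mQ x = ‖horiz x‖ ^ 2 - x 2 ^ 2 := by
  simp only [horiz, EuclideanSpace.norm_sq_eq, Fin.sum_univ_two, mQ, mB]
  simp; ring

lemma FutureTimelike.norm_horiz_lt {u : Fin 3 → ℝ} (hu : FutureTimelike u) :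
    ‖horiz u‖ < u 2 :=
  lt_of_pow_lt_pow_left₀ 2 hu.2.le (by linarith [mQ_eq_norm_horiz_sq u ▸ hu.1])

lemma FutureCausal.norm_horiz_le {u : Fin 3 → ℝ} (hu : FutureCausal u) :
    ‖horiz u‖ ≤ u 2 :=
  le_of_pow_le_pow_left₀ two_ne_zero hu.2.le (by linarith [mQ_eq_norm_horiz_sq u ▸ hu.1])

def heightGraph (h : EuclideanSpace ℝ (Fin 2) → ℝ) : Set (Fin 3 → ℝ) :=
  range fun p : EuclideanSpace ℝ (Fin 2) => ![p 0, p 1, h p]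

def height (h : EuclideanSpace ℝ (Fin 2) → ℝ) (x : Fin 3 → ℝ) : ℝ := x 2 - h (horiz x)

section Graph

variable {h : EuclideanSpace ℝ (Fin 2) → ℝ}

lemma mem_heightGraph_iff {x : Fin 3 → ℝ} : x ∈ heightGraph h ↔ height h x = 0 := by
  constructor
  · rintro ⟨p, rfl⟩
    have : horiz ![p 0, p 1, h p] = p := by ext i; fin_cases i <;> simp [horiz]
    simp [height, this]
  · intro hx
    refine ⟨horiz x, funext fun i => ?_⟩
    fin_cases i <;> simp only [height, horiz] at hx ⊢ <;> simp
    linarith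

lemma continuous_height (hh : Continuous h) : Continuous (height h) :=
  (continuous_apply 2).sub (hh.comp continuous_horiz)

lemma mem_IPlus_heightGraph_of_height_pos {x : Fin 3 → ℝ} (hx : 0 < height h x) :
    x ∈ IPlus (heightGraph h) := by
  refine ⟨_, ⟨horiz x, rfl⟩, ?_, ?_⟩ <;> simp [height, horiz, mQ, mB] at hx ⊢
  · positivity
  · exact hx

variable (hh : LipschitzWith 1 h)
include hh

lemma height_add_ge (x w : Fin 3 → ℝ) :
    height h x + (w 2 - ‖horiz w‖) ≤ height h (x + w) := by
  have := hh.dist_le_mul (horiz (x + w)) (horiz x)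
  rw [horiz_add, dist_self_add_left, Real.dist_eq] at this
  simp only [NNReal.coe_one, one_mul] at this
  simp only [height, horiz_add, Pi.add_apply]
  linarith [le_abs_self (h (horiz x + horiz w) - h (horiz x))]

lemma height_le_height_add {u : Fin 3 → ℝ} (hu : FutureCausal u) (x : Fin 3 → ℝ) :
    height h x ≤ height h (x + u) := by
  linarith [height_add_ge hh x u, FutureCausal.norm_horiz_le hu]

lemma height_pos_of_mem_IPlus {x : Fin 3 → ℝ} (hx : x ∈ IPlus (heightGraph h)) :
    0 < height h x := by
  obtain ⟨s, hs, hxs⟩ := hx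
  have := height_add_ge hh s (x - s)
  rw [add_sub_cancel, mem_heightGraph_iff.1 hs] at this
  linarith [FutureTimelike.norm_horiz_lt hxs]

lemma mem_DOD_heightGraph_iff {x : Fin 3 → ℝ} :
    x ∈ DOD (heightGraph h) ↔
      ∀ u, FutureCausal u → ∃ t : ℝ, 0 ≤ t ∧ 0 ≤ height h (x + t • u) := by
  constructor
  · rintro ((hx | hx) | hx) u hu
    · exact ⟨0, le_rfl, by simp [mem_heightGraph_iff.1 hx]⟩
    · exact ⟨0, le_rfl, by simpa using (height_pos_of_mem_IPlus hh hx).le⟩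
    · obtain ⟨t, ht, hS⟩ := hx u hu
      exact ⟨t, ht, (mem_heightGraph_iff.1 hS).ge⟩
  · intro H
    rcases lt_or_ge 0 (height h x) with hx | hx
    · exact Or.inl (Or.inr (mem_IPlus_heightGraph_of_height_pos hx))
    refine Or.inr fun u hu => ?_
    obtain ⟨t, ht, hxt⟩ := H u hu
    have hcont : ContinuousOn (fun σ : ℝ => height h (x + σ • u)) (Icc 0 t) :=
      ((continuous_height hh.continuous).comp (by fun_prop)).continuousOn
    obtain ⟨σ, hσ, hσS⟩ := intermediate_value_Icc ht hcont ⟨by simpa using hx, hxt⟩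
    exact ⟨σ, hσ.1, mem_heightGraph_iff.2 hσS⟩

lemma add_mem_DOD_heightGraph {x u : Fin 3 → ℝ} (hx : x ∈ DOD (heightGraph h))
    (hu : FutureCausal u) : x + u ∈ DOD (heightGraph h) := by
  rw [mem_DOD_heightGraph_iff hh] at hx ⊢
  intro w hw
  obtain ⟨t, ht, hxt⟩ := hx w hw
  refine ⟨t, ht, hxt.trans ?_⟩
  rw [add_right_comm]
  exact height_le_height_add hh hu _

lemma add_mem_interior_DOD_heightGraph {x u : Fin 3 → ℝ}
    (hx : x ∈ closure (DOD (heightGraph h))) (hu : FutureTimelike u) :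
    x + u ∈ interior (DOD (heightGraph h)) := by
  have hnhds : (fun y => x + u - y) ⁻¹' {w | FutureTimelike w} ∈ 𝓝 x :=
    (isOpen_setOf_futureTimelike.preimage (by fun_prop)).mem_nhds (by simpa using hu)
  obtain ⟨y, hyu, hy⟩ := mem_closure_iff_nhds.1 hx _ hnhds
  refine mem_interior.2 ⟨(fun z => z - y) ⁻¹' {w | FutureTimelike w}, fun z hz => ?_,
    isOpen_setOf_futureTimelike.preimage (by fun_prop), hyu⟩
  simpa using add_mem_DOD_heightGraph hh hy (FutureTimelike.futureCausal hz)

lemma not_futureTimelike_sub_of_mem_frontier {p x : Fin 3 → ℝ}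
    (hp : p ∈ frontier (DOD (heightGraph h))) (hx : x ∈ closure (DOD (heightGraph h))) :
    ¬ FutureTimelike (p - x) := fun hpx =>
  hp.2 (by simpa using add_mem_interior_DOD_heightGraph hh hx hpx)

lemma mQ_sub_nonneg_of_mem_frontier {p q : Fin 3 → ℝ}
    (hp : p ∈ frontier (DOD (heightGraph h))) (hq : q ∈ frontier (DOD (heightGraph h))) :
    0 ≤ mQ (p - q) :=
  mQ_nonneg_of_not_futureTimelike
    (not_futureTimelike_sub_of_mem_frontier hh hp (frontier_subset_closure hq))
    (by simpa using not_futureTimelike_sub_of_mem_frontier hh hq (frontier_subset_closure hp))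

lemma mB_sub_nonpos_of_ray_subset_frontier {r v x : Fin 3 → ℝ} (hv : FutureCausal v)
    (hray : ∀ t : ℝ, 0 ≤ t → r + t • v ∈ frontier (DOD (heightGraph h)))
    (hx : x ∈ closure (DOD (heightGraph h))) : mB (x - r) v ≤ 0 := by
  by_contra! hpos
  obtain ⟨s, hs, hrx⟩ := exists_futureTimelike_add_smul (a := r - x) hv
    (by rw [mB_sub_left] at hpos ⊢; linarith)
  refine not_futureTimelike_sub_of_mem_frontier hh (hray s hs) hx ?_
  rwa [sub_add_eq_add_sub] at hrx

/-- `z + η e₃` lies in `D(S)`: from `r + (η / 2) e₃ ∈ D(S)` the ray in direction `u` reaches the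
region above the graph, and the remaining offset `z - r + (η / 2) e₃ + s u` is future timelike
for large `s` because `B(z - r, u) ≤ 0`. -/
lemma mem_closure_DOD_heightGraph {z : Fin 3 → ℝ}
    (H : ∀ u, FutureCausal u → ∃ r ∈ closure (DOD (heightGraph h)), mB (z - r) u ≤ 0) :
    z ∈ closure (DOD (heightGraph h)) := by
  have hlift : ∀ η : ℝ, 0 < η → z + η • e₃ ∈ DOD (heightGraph h) := by
    intro η hη
    rw [mem_DOD_heightGraph_iff hh]
    intro u hu
    obtain ⟨r, hr, hzr⟩ := H u hu
    have hp : r + (η / 2) • e₃ ∈ DOD (heightGraph h) :=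
      interior_subset <|
        add_mem_interior_DOD_heightGraph hh hr (futureTimelike_smul_e₃ (half_pos hη))
    obtain ⟨t, ht, hpt⟩ := (mem_DOD_heightGraph_iff hh).1 hp u hu
    obtain ⟨s, hs, hw⟩ := exists_futureTimelike_add_smul (a := z - r + (η / 2) • e₃) hu
      (by rw [mB_add_left, mB_smul_left, mB_e₃_left]; nlinarith [hu.2])
    refine ⟨t + s, by positivity, hpt.trans ?_⟩
    have : z + η • e₃ + (t + s) • u =
        r + (η / 2) • e₃ + t • u + (z - r + (η / 2) • e₃ + s • u) := by
      module
    rw [this]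
    exact height_le_height_add hh (FutureTimelike.futureCausal hw) _
  have hlim : Tendsto (fun η : ℝ => z + η • e₃) (𝓝[>] 0) (𝓝 z) := by
    have : Continuous (fun η : ℝ => z + η • e₃) := by fun_prop
    simpa using (this.tendsto 0).mono_left nhdsWithin_le_nhds
  exact mem_closure_of_tendsto hlim (eventually_nhdsWithin_of_forall hlift)

end Graph

end Minkowski

open Minkowski in
theorem parallel_null_rays_in_boundary_general (S : Set (Fin 3 → ℝ))
    (hS : IsStrictlySpacelikeGraph S)
    (r₁ r₂ v : Fin 3 → ℝ) (hv : FutureNull v)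
    (h₁ : ∀ t : ℝ, 0 ≤ t → r₁ + t • v ∈ frontier (DOD S))
    (h₂ : ∀ t : ℝ, 0 ≤ t → r₂ + t • v ∈ frontier (DOD S))
    (hline : ¬ ∃ t : ℝ, r₂ = r₁ + t • v) :
    mB r₁ v = mB r₂ v ∧
      SupportingAt (DOD S) r₁ v ∧
      (∀ t : ℝ, 0 ≤ t →
        mB (r₁ + t • v - r₁) v = 0 ∧ mB (r₂ + t • v - r₁) v = 0) ∧
      segment ℝ r₁ r₂ ⊆ frontier (DOD S) ∧
      0 < mQ (r₂ - r₁) := by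
  obtain ⟨h, hstrict, rfl⟩ := hS
  have hh : LipschitzWith 1 h := LipschitzWith.of_dist_le_mul fun p q => by
    rcases eq_or_ne p q with rfl | hpq
    · simp
    · simpa [Real.dist_eq] using (hstrict p q hpq).le
  change ∀ t : ℝ, 0 ≤ t → r₁ + t • v ∈ frontier (DOD (heightGraph h)) at h₁
  change ∀ t : ℝ, 0 ≤ t → r₂ + t • v ∈ frontier (DOD (heightGraph h)) at h₂
  have hr₁ : r₁ ∈ frontier (DOD (heightGraph h)) := by simpa using h₁ 0 le_rfl
  have hr₂ : r₂ ∈ frontier (DOD (heightGraph h)) := by simpa using h₂ 0 le_rfl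
  have hsupp : ∀ x ∈ closure (DOD (heightGraph h)), mB (x - r₁) v ≤ 0 := fun _ hx =>
    mB_sub_nonpos_of_ray_subset_frontier hh hv.futureCausal h₁ hx
  have hB : mB r₁ v = mB r₂ v := by
    have h₁₂ := hsupp r₂ (frontier_subset_closure hr₂)
    have h₂₁ := mB_sub_nonpos_of_ray_subset_frontier hh hv.futureCausal h₂
      (frontier_subset_closure hr₁)
    rw [mB_sub_left] at h₁₂ h₂₁
    linarith
  have hQv : mB v v = 0 := hv.1
  refine ⟨hB, Or.inl fun x hx => hsupp x (subset_closure hx), fun t _ => ⟨?_, ?_⟩,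
    fun z hz => ⟨?_, ?_⟩, ?_⟩
  · rw [add_sub_cancel_left, mB_smul_left]; exact mul_eq_zero_of_right _ hQv
  · rw [add_sub_right_comm, mB_add_left, mB_smul_left, mB_sub_left, hB, hQv]
    ring
  · refine mem_closure_DOD_heightGraph hh fun u _ => ?_
    rcases mB_sub_nonpos_or_of_mem_segment hz u with hle | hle
    exacts [⟨r₁, frontier_subset_closure hr₁, hle⟩, ⟨r₂, frontier_subset_closure hr₂, hle⟩]
  · exact notMem_interior_of_mB_sub_eq_zero (fun x hx => hsupp x (subset_closure hx)) hv.2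
      (mB_sub_eq_zero_of_mem_segment hB hz)
  · refine (mQ_sub_nonneg_of_mem_frontier hh hr₂ hr₁).lt_of_ne fun hQ => hline ?_
    obtain ⟨t, ht⟩ := exists_eq_smul_of_mB_eq_zero_of_mQ_eq_zero hv
      (by rw [mB_sub_left, hB, sub_self]) hQ.symm
    exact ⟨t, by rw [← ht]; abel⟩

/-- The geometric core of **Proposition 14**: if the frontier `X` of the domain of dependence
contains two null rays with the same future-directed null direction `v` whose basepoints
`r₁ ≠ r₂` do not lie on a common line of direction `v`, then `B(r₁,v) = B(r₂,v)`, the null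
plane through `r₁` with normal `v` is a supporting plane containing both rays, the segment
from `r₁` to `r₂` lies in `X`, and `r₂ − r₁` is spacelike. -/
theorem parallel_null_rays_in_boundary (S : Set (Fin 3 → ℝ))
    (hS : IsStrictlySpacelikeGraph S) (hne : DOD S ≠ Set.univ)
    (r₁ r₂ v : Fin 3 → ℝ) (hv : FutureNull v) (hr : r₁ ≠ r₂)
    (h₁ : ∀ t : ℝ, 0 ≤ t → r₁ + t • v ∈ frontier (DOD S))
    (h₂ : ∀ t : ℝ, 0 ≤ t → r₂ + t • v ∈ frontier (DOD S))
    (hline : ¬ ∃ t : ℝ, r₂ = r₁ + t • v) :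
    mB r₁ v = mB r₂ v ∧
      SupportingAt (DOD S) r₁ v ∧
      (∀ t : ℝ, 0 ≤ t →
        mB (r₁ + t • v - r₁) v = 0 ∧ mB (r₂ + t • v - r₁) v = 0) ∧
      segment ℝ r₁ r₂ ⊆ frontier (DOD S) ∧
      0 < mQ (r₂ - r₁) :=
  parallel_null_rays_in_boundary_general S hS r₁ r₂ v hv h₁ h₂ hline
end

section
/- Let S be a strictly spacelike entire graph in 3-dimensional Minkowski space with D(S) ≠ ℝ³ and let X be the frontier of D(S). For r ∈ X let N(r) be the union of {r} with all future-directed null rays based at r that are contained in X, and let F(r) be the convex hull of N(r). If r, s ∈ X are distinct and F(r) ∩ F(s) ≠ ∅, then r and s lie on a single null ray contained in X. (The Claim in the proof of Proposition 13: the faces F(r) of the boundary are pairwise disjoint except along common null rays.) -/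
/-- `N r`: the union of `{r}` with all future-directed null rays based at `r` contained in the
set `X`. -/
def NullStar (X : Set (Fin 3 → ℝ)) (r : Fin 3 → ℝ) : Set (Fin 3 → ℝ) :=
  {r} ∪ {x | ∃ v : Fin 3 → ℝ, FutureNull v ∧ (∀ s : ℝ, 0 ≤ s → r + s • v ∈ X) ∧
      ∃ t : ℝ, 0 ≤ t ∧ x = r + t • v}

/-!
The frontier `X` of `D(S)` is achronal: `D(S)` is stable under adding future timelike vectors,
so its closure plus such a vector lies in its interior. Hence along a null ray `r + u v ⊆ X` the
quantity `Q(r + u v - s) = Q(r - s) + 2u B(r - s, v)` stays nonnegative, i.e. `B(r - s, v) ≥ 0`,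
and `F(r)` lies in the half-space `B(r - s, · - r) ≥ 0`; symmetrically `F(s)` lies in
`B(s - r, · - s) ≥ 0`. Adding the two inequalities at a common point `x` gives `Q(r - s) ≤ 0`, so
`r - s` is null and `x` lies on both bounding planes. If `s - r` is future null, then `x ≠ r` and
`B(s - r, x - r) = 0`; but unless a ray of `N(r)` points along `s - r` (the only null direction
`B`-orthogonal to it), `N(r)` lies in the convex set `{r} ∪ {B(s - r, · - r) < 0}`, which meets
that plane only in `r`.
-/

lemma isLinearMap_mB (d : Fin 3 → ℝ) : IsLinearMap ℝ (mB d) where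
  map_add v w := by simp only [mB, Pi.add_apply]; ring
  map_smul c v := by simp only [mB, Pi.smul_apply, smul_eq_mul]; ring

lemma mB_comm (v w : Fin 3 → ℝ) : mB v w = mB w v := by
  simp only [mB]; ring

lemma FutureTimelike.add {u v : Fin 3 → ℝ} (hu : FutureTimelike u) (hv : FutureTimelike v) :
    FutureTimelike (u + v) := by
  obtain ⟨hu, hu2⟩ := hu
  obtain ⟨hv, hv2⟩ := hv
  simp only [FutureTimelike, mQ, mB, Pi.add_apply] at *
  refine ⟨?_, by linarith⟩
  nlinarith [sq_nonneg (u 0 * v 1 - u 1 * v 0), sq_nonneg (u 0 * v 0 + u 1 * v 1),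
    mul_pos hu2 hv2, sq_nonneg (u 0 * v 0 + u 1 * v 1 - u 2 * v 2)]

lemma mQ_smul (c : ℝ) (v : Fin 3 → ℝ) : mQ (c • v) = c ^ 2 * mQ v := by
  simp only [mQ, mB, Pi.smul_apply, smul_eq_mul]; ring

lemma FutureTimelike.smul {v : Fin 3 → ℝ} (hv : FutureTimelike v) {c : ℝ} (hc : 0 < c) :
    FutureTimelike (c • v) :=
  ⟨by rw [mQ_smul]; exact mul_neg_of_pos_of_neg (by positivity) hv.1, mul_pos hc hv.2⟩

lemma isOpen_setOf_futureTimelike : IsOpen {v : Fin 3 → ℝ | FutureTimelike v} := by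
  simp only [FutureTimelike, mQ, mB, Set.ofPred_and]
  exact (isOpen_lt (by fun_prop) continuous_const).inter (isOpen_lt continuous_const (by fun_prop))

lemma futureTimelike_or_futureTimelike_neg {v : Fin 3 → ℝ} (hv : mQ v < 0) :
    FutureTimelike v ∨ FutureTimelike (-v) := by
  have hQ : mQ (-v) = mQ v := by simp only [mQ, mB, Pi.neg_apply]; ring
  rcases lt_trichotomy (v 2) 0 with h2 | h2 | h2
  · exact Or.inr ⟨hQ ▸ hv, by simpa using h2⟩
  · simp only [mQ, mB, h2] at hv
    nlinarith [mul_self_nonneg (v 0), mul_self_nonneg (v 1)]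
  · exact Or.inl ⟨hv, h2⟩

lemma eq_zero_of_mQ_eq_zero {v : Fin 3 → ℝ} (hv : mQ v = 0) (h2 : v 2 = 0) : v = 0 := by
  simp only [mQ, mB, h2] at hv
  have h0 : v 0 = 0 := by nlinarith [mul_self_nonneg (v 0), mul_self_nonneg (v 1)]
  have h1 : v 1 = 0 := by nlinarith [mul_self_nonneg (v 0), mul_self_nonneg (v 1)]
  ext i; fin_cases i <;> assumption

lemma FutureNull.eq_smul_of_mB_eq_zero {u v : Fin 3 → ℝ} (hu : FutureNull u) (hv : FutureNull v)
    (huv : mB u v = 0) : ∃ κ : ℝ, 0 < κ ∧ v = κ • u := by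
  obtain ⟨hu, hu2⟩ := hu
  obtain ⟨hv, hv2⟩ := hv
  simp only [mQ, mB] at hu hv huv
  -- `(u₀v₁ - u₁v₀)² = 0` is the equality case of the Cauchy–Schwarz inequality for the spatial parts
  have hcross : u 0 * v 1 - u 1 * v 0 = 0 := by
    have : (u 0 * v 1 - u 1 * v 0) ^ 2 = 0 := by
      linear_combination (v 0 * v 0 + v 1 * v 1) * hu + (u 2 * u 2) * hv
        - (u 0 * v 0 + u 1 * v 1 + u 2 * v 2) * huv
    exact pow_eq_zero_iff two_ne_zero |>.mp this
  have h0 : u 2 * (v 0 * u 2 - v 2 * u 0) = 0 := by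
    linear_combination -(v 0 * hu) + u 0 * huv - u 1 * hcross
  have h1 : u 2 * (v 1 * u 2 - v 2 * u 1) = 0 := by
    linear_combination -(v 1 * hu) + u 1 * huv + u 0 * hcross
  have hu2' : u 2 ≠ 0 := hu2.ne'
  have e0 : v 0 * u 2 - v 2 * u 0 = 0 := (mul_eq_zero.mp h0).resolve_left hu2'
  have e1 : v 1 * u 2 - v 2 * u 1 = 0 := (mul_eq_zero.mp h1).resolve_left hu2'
  refine ⟨v 2 / u 2, by positivity, ?_⟩
  ext i
  fin_cases i
  · show v 0 = v 2 / u 2 * u 0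
    field_simp; linarith
  · show v 1 = v 2 / u 2 * u 1
    field_simp; linarith
  · show v 2 = v 2 / u 2 * u 2
    field_simp

lemma convex_insert_setOf_lt {𝕜 E : Type*} [Field 𝕜] [LinearOrder 𝕜] [IsStrictOrderedRing 𝕜]
    [AddCommGroup E] [Module 𝕜 E] {f : E → 𝕜} (hf : IsLinearMap 𝕜 f) (a : E) :
    Convex 𝕜 (insert a {p | f p < f a}) := by
  rw [convex_iff_forall_pos]
  intro p hp q hq α β hα hβ hαβ
  have hcombo : f (α • p + β • q) = α * f p + β * f q := by
    rw [hf.map_add, hf.map_smul, hf.map_smul, smul_eq_mul, smul_eq_mul]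
  simp only [Set.mem_insert_iff, Set.mem_ofPred_eq, hcombo] at hp hq ⊢
  obtain rfl : α = 1 - β := eq_sub_of_add_eq hαβ
  rcases hp with rfl | hp <;> rcases hq with rfl | hq
  · exact Or.inl (Convex.combo_self hαβ _)
  · exact Or.inr (by nlinarith [mul_lt_mul_of_pos_left hq hβ])
  · exact Or.inr (by nlinarith [mul_lt_mul_of_pos_left hp hα])
  · exact Or.inr (by nlinarith [mul_lt_mul_of_pos_left hp hα, mul_lt_mul_of_pos_left hq hβ])

open scoped Pointwise in
lemma sub_notMem_of_mem_frontier {G : Type*} [TopologicalSpace G] [AddCommGroup G]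
    [IsTopologicalAddGroup G] {D T : Set G} (hT : IsOpen T) (hDT : D + T ⊆ D) {p q : G}
    (hp : p ∈ frontier D) (hq : q ∈ frontier D) : q - p ∉ T := by
  intro hqp
  have hsub : closure D + T ⊆ interior D := by
    rw [hT.closure_add]
    exact interior_maximal hDT hT.add_left
  exact hq.2 (hsub ⟨p, hp.1, q - p, hqp, add_sub_cancel p q⟩)

section Graph

variable {h : EuclideanSpace ℝ (Fin 2) → ℝ}

def graphOf (h : EuclideanSpace ℝ (Fin 2) → ℝ) : Set (Fin 3 → ℝ) :=
  Set.range fun p : EuclideanSpace ℝ (Fin 2) => ![p 0, p 1, h p]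

def spatialProj (y : Fin 3 → ℝ) : EuclideanSpace ℝ (Fin 2) := WithLp.toLp 2 ![y 0, y 1]

def graphGap (h : EuclideanSpace ℝ (Fin 2) → ℝ) (y : Fin 3 → ℝ) : ℝ := h (spatialProj y) - y 2

lemma mem_graphOf_iff {y : Fin 3 → ℝ} : y ∈ graphOf h ↔ graphGap h y = 0 := by
  rw [graphOf, graphGap, sub_eq_zero]
  constructor
  · rintro ⟨p, rfl⟩
    congr 1
    ext i
    fin_cases i <;> rfl
  · intro hy
    refine ⟨spatialProj y, ?_⟩
    ext i
    fin_cases i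
    · rfl
    · rfl
    · exact hy

lemma continuous_spatialProj : Continuous spatialProj := by
  unfold spatialProj
  fun_prop

lemma dist_spatialProj (a b : Fin 3 → ℝ) :
    dist (spatialProj a) (spatialProj b) = √((a 0 - b 0) ^ 2 + (a 1 - b 1) ^ 2) := by
  simp [EuclideanSpace.dist_eq, spatialProj, Real.dist_eq, sq_abs]

lemma graphGap_add_le (hh : LipschitzWith 1 h) (y : Fin 3 → ℝ) {w : Fin 3 → ℝ} (hw : mQ w ≤ 0)
    (hw2 : 0 ≤ w 2) : graphGap h (y + w) ≤ graphGap h y := by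
  have hlip : h (spatialProj (y + w)) - h (spatialProj y) ≤ w 2 :=
    calc h (spatialProj (y + w)) - h (spatialProj y)
        ≤ dist (spatialProj (y + w)) (spatialProj y) :=
          (le_abs_self _).trans (by simpa [Real.dist_eq] using hh.dist_le_mul _ _)
      _ = √(w 0 ^ 2 + w 1 ^ 2) := by simp [dist_spatialProj]
      _ ≤ w 2 := Real.sqrt_le_iff.mpr ⟨hw2, by simp only [mQ, mB] at hw; nlinarith⟩
  simp only [graphGap, Pi.add_apply]
  linarith

lemma exists_mem_graphOf_of_graphGap (hh : LipschitzWith 1 h) {y v : Fin 3 → ℝ} {σ : ℝ}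
    (hσ : 0 ≤ σ) (h0 : 0 ≤ graphGap h y) (hσv : graphGap h (y + σ • v) ≤ 0) :
    ∃ t : ℝ, 0 ≤ t ∧ y + t • v ∈ graphOf h := by
  have hcont : Continuous fun t : ℝ => graphGap h (y + t • v) := by
    unfold graphGap
    have := hh.continuous
    have := continuous_spatialProj
    fun_prop
  obtain ⟨t, ht, hgap⟩ := intermediate_value_Icc' hσ hcont.continuousOn
    ⟨hσv, by simpa using h0⟩
  exact ⟨t, ht.1, mem_graphOf_iff.mpr hgap⟩

end Graph

lemma add_mem_DOD_graphOf {h : EuclideanSpace ℝ (Fin 2) → ℝ} (hh : LipschitzWith 1 h)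
    {x w : Fin 3 → ℝ} (hx : x ∈ DOD (graphOf h)) (hw : FutureTimelike w) :
    x + w ∈ DOD (graphOf h) := by
  rcases hx with (hxS | ⟨s, hs, hxs⟩) | hx
  · exact Or.inl (Or.inr ⟨x, hxS, by simpa using hw⟩)
  · exact Or.inl (Or.inr ⟨s, hs, by simpa only [add_sub_right_comm] using hxs.add hw⟩)
  obtain ⟨τ, hτ, hτS⟩ := hx w ⟨hw.1.le, hw.2⟩
  rcases lt_or_ge τ 1 with hτ1 | hτ1
  · refine Or.inl (Or.inr ⟨x + τ • w, hτS, ?_⟩)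
    convert hw.smul (sub_pos.mpr hτ1) using 1
    module
  refine Or.inr fun v hv => ?_
  obtain ⟨σ, hσ, hσS⟩ := hx v hv
  refine exists_mem_graphOf_of_graphGap hh hσ ?_ ?_
  · -- `x + τ • w` lies on the graph, in the causal future of `x + w`
    have hτw : (x + w) + (τ - 1) • w = x + τ • w := by module
    have := graphGap_add_le hh (x + w) (w := (τ - 1) • w)
      (by rw [mQ_smul]; exact mul_nonpos_of_nonneg_of_nonpos (sq_nonneg _) hw.1.le)
      (by simpa using mul_nonneg (sub_nonneg.mpr hτ1) hw.2.le)
    rwa [hτw, mem_graphOf_iff.mp hτS] at this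
  · have hσw : x + w + σ • v = (x + σ • v) + w := by abel
    have := graphGap_add_le hh (x + σ • v) hw.1.le hw.2.le
    rwa [← hσw, mem_graphOf_iff.mp hσS] at this

def IsAchronal (X : Set (Fin 3 → ℝ)) : Prop := ∀ p ∈ X, ∀ q ∈ X, 0 ≤ mQ (p - q)

open scoped Pointwise in
lemma isAchronal_frontier_DOD_graphOf {h : EuclideanSpace ℝ (Fin 2) → ℝ}
    (hh : LipschitzWith 1 h) : IsAchronal (frontier (DOD (graphOf h))) := by
  intro p hp q hq
  by_contra! hpq
  have hDT : DOD (graphOf h) + {v | FutureTimelike v} ⊆ DOD (graphOf h) := by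
    rintro _ ⟨x, hx, w, hw, rfl⟩
    exact add_mem_DOD_graphOf hh hx hw
  rcases futureTimelike_or_futureTimelike_neg hpq with hpq | hqp
  · exact sub_notMem_of_mem_frontier isOpen_setOf_futureTimelike hDT hq hp hpq
  · rw [neg_sub] at hqp
    exact sub_notMem_of_mem_frontier isOpen_setOf_futureTimelike hDT hp hq hqp

section Achronal

variable {X : Set (Fin 3 → ℝ)}

lemma IsAchronal.mB_nonneg_of_ray (hX : IsAchronal X) {a b v : Fin 3 → ℝ} (hb : b ∈ X)
    (hv : mQ v = 0) (hray : ∀ u : ℝ, 0 ≤ u → a + u • v ∈ X) : 0 ≤ mB (a - b) v := by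
  by_contra! hneg
  have hQ : ∀ u : ℝ, mQ (a + u • v - b) = mQ (a - b) + 2 * u * mB (a - b) v := by
    intro u
    simp only [mQ, mB, Pi.add_apply, Pi.sub_apply, Pi.smul_apply, smul_eq_mul] at hv ⊢
    linear_combination u ^ 2 * hv
  have hab : 0 ≤ mQ (a - b) := hX a (by simpa using hray 0 le_rfl) b hb
  -- far enough along the ray, `a + u • v` is in the timelike past of `b`
  set u := (mQ (a - b) + 1) / (-(2 * mB (a - b) v))
  have hu : 2 * u * mB (a - b) v = -(mQ (a - b) + 1) := by
    have : mB (a - b) v ≠ 0 := hneg.ne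
    simp only [u]
    field_simp
  have := hX _ (hray u (div_nonneg (by linarith) (by linarith))) b hb
  rw [hQ, hu] at this
  linarith

lemma IsAchronal.convexHull_nullStar_subset (hX : IsAchronal X) {a b : Fin 3 → ℝ}
    (hb : b ∈ X) :
    convexHull ℝ (NullStar X a) ⊆ {p | mB (a - b) a ≤ mB (a - b) p} ∩ {p | a 2 ≤ p 2} := by
  refine convexHull_min ?_ ((convex_halfSpace_ge (isLinearMap_mB _) _).inter
    (convex_halfSpace_ge (LinearMap.proj 2 : (Fin 3 → ℝ) →ₗ[ℝ] ℝ).isLinear _))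
  rintro p (rfl | ⟨v, hv, hray, t, ht, rfl⟩)
  · simp
  have hBv := hX.mB_nonneg_of_ray hb hv.1 hray
  refine ⟨?_, ?_⟩
  · simp only [Set.mem_ofPred_eq, (isLinearMap_mB _).map_add, (isLinearMap_mB _).map_smul,
      smul_eq_mul]
    nlinarith
  · simp only [Set.mem_ofPred_eq, Pi.add_apply, Pi.smul_apply, smul_eq_mul]
    nlinarith [hv.2]

lemma IsAchronal.mQ_sub_eq_zero_of_mem_convexHull_nullStar (hX : IsAchronal X)
    {r s x : Fin 3 → ℝ} (hr : r ∈ X) (hs : s ∈ X) (hxr : x ∈ convexHull ℝ (NullStar X r))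
    (hxs : x ∈ convexHull ℝ (NullStar X s)) :
    mQ (r - s) = 0 ∧ mB (s - r) x = mB (s - r) r := by
  have h₁ := (hX.convexHull_nullStar_subset hs hxr).1
  have h₂ := (hX.convexHull_nullStar_subset hr hxs).1
  have hrs := hX r hr s hs
  simp only [Set.mem_ofPred_eq, mQ, mB, Pi.sub_apply] at h₁ h₂ hrs ⊢
  constructor <;> linarith

lemma IsAchronal.exists_null_ray_of_mem_convexHull_nullStar (hX : IsAchronal X)
    {r s x : Fin 3 → ℝ} (hs : s ∈ X) (hsr : FutureNull (s - r))
    (hx : x ∈ convexHull ℝ (NullStar X r)) (hxB : mB (s - r) x = mB (s - r) r) (hxr : x ≠ r) :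
    ∃ v : Fin 3 → ℝ, FutureNull v ∧
      ∃ t : ℝ, 0 ≤ t ∧ s = r + t • v ∧ ∀ u : ℝ, 0 ≤ u → r + u • v ∈ X := by
  by_contra hno
  have hB := isLinearMap_mB (s - r)
  -- a null ray of `X` from `r` that is `mB`-orthogonal to `s - r` runs through `s`
  have hsub : NullStar X r ⊆ insert r {p | mB (s - r) p < mB (s - r) r} := by
    rintro p (rfl | ⟨v, hv, hray, t, ht, rfl⟩)
    · exact Set.mem_insert _ _
    rcases ht.eq_or_lt with rfl | ht
    · simp
    have hBv : mB (s - r) v < 0 := by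
      have hle : 0 ≤ mB (r - s) v := hX.mB_nonneg_of_ray hs hv.1 hray
      rw [← neg_sub, mB_comm, (isLinearMap_mB v).map_neg, mB_comm] at hle
      refine lt_of_le_of_ne (by linarith) fun h0 => hno ?_
      obtain ⟨κ, hκ, hsrv⟩ := hv.eq_smul_of_mB_eq_zero hsr (by rw [mB_comm, h0])
      exact ⟨v, hv, κ, hκ.le, by rw [← hsrv, add_sub_cancel], hray⟩
    refine Set.mem_insert_of_mem _ ?_
    rw [Set.mem_ofPred_eq, hB.map_add, hB.map_smul, smul_eq_mul]
    nlinarith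
  rcases convexHull_min hsub (convex_insert_setOf_lt hB r) hx with hx | hx
  · exact hxr hx
  · exact hx.ne hxB

end Achronal

lemma IsStrictlySpacelikeGraph.exists_lipschitzWith {S : Set (Fin 3 → ℝ)}
    (hS : IsStrictlySpacelikeGraph S) :
    ∃ h : EuclideanSpace ℝ (Fin 2) → ℝ, LipschitzWith 1 h ∧ S = graphOf h := by
  obtain ⟨h, hlt, rfl⟩ := hS
  refine ⟨h, LipschitzWith.of_dist_le_mul fun p q => ?_, rfl⟩
  rcases eq_or_ne p q with rfl | hpq
  · simp
  · simpa [Real.dist_eq] using (hlt p q hpq).le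

theorem faces_disjoint_unless_common_null_ray_general (S : Set (Fin 3 → ℝ))
    (hS : IsStrictlySpacelikeGraph S)
    (r s : Fin 3 → ℝ)
    (hr : r ∈ frontier (DOD S)) (hs : s ∈ frontier (DOD S)) (hrs : r ≠ s)
    (hmeet : (convexHull ℝ (NullStar (frontier (DOD S)) r) ∩
        convexHull ℝ (NullStar (frontier (DOD S)) s)).Nonempty) :
    ∃ v : Fin 3 → ℝ, FutureNull v ∧
      ((∃ t : ℝ, 0 ≤ t ∧ s = r + t • v ∧ ∀ u : ℝ, 0 ≤ u → r + u • v ∈ frontier (DOD S)) ∨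
       (∃ t : ℝ, 0 ≤ t ∧ r = s + t • v ∧ ∀ u : ℝ, 0 ≤ u → s + u • v ∈ frontier (DOD S))) := by
  obtain ⟨h, hh, rfl⟩ := hS.exists_lipschitzWith
  have hX := isAchronal_frontier_DOD_graphOf hh
  obtain ⟨x, hxr, hxs⟩ := hmeet
  obtain ⟨hQ, hxr'⟩ := hX.mQ_sub_eq_zero_of_mem_convexHull_nullStar hr hs hxr hxs
  obtain ⟨hQ', hxs'⟩ := hX.mQ_sub_eq_zero_of_mem_convexHull_nullStar hs hr hxs hxr
  have hrx := (hX.convexHull_nullStar_subset hs hxr).2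
  have hsx := (hX.convexHull_nullStar_subset hr hxs).2
  have h2 : r 2 ≠ s 2 := fun h2 =>
    hrs (sub_eq_zero.mp (eq_zero_of_mQ_eq_zero hQ (by simp [h2])))
  rcases h2.lt_or_gt with hlt | hgt
  · obtain ⟨v, hv, hray⟩ := hX.exists_null_ray_of_mem_convexHull_nullStar hs
      ⟨hQ', by simpa using hlt⟩ hxr hxr' (by rintro rfl; exact hsx.not_gt hlt)
    exact ⟨v, hv, Or.inl hray⟩
  · obtain ⟨v, hv, hray⟩ := hX.exists_null_ray_of_mem_convexHull_nullStar hr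
      ⟨hQ, by simpa using hgt⟩ hxs hxs' (by rintro rfl; exact hrx.not_gt hgt)
    exact ⟨v, hv, Or.inr hray⟩

/-- The Claim in the proof of **Proposition 13**: the faces `F(r) = conv N(r)` of the frontier
`X` of a domain of dependence are pairwise disjoint, except that `F(r) ∩ F(s) ≠ ∅` forces `r`
and `s` to lie on a single null ray contained in `X`. -/
theorem faces_disjoint_unless_common_null_ray (S : Set (Fin 3 → ℝ))
    (hS : IsStrictlySpacelikeGraph S) (hne : DOD S ≠ Set.univ)
    (r s : Fin 3 → ℝ)
    (hr : r ∈ frontier (DOD S)) (hs : s ∈ frontier (DOD S)) (hrs : r ≠ s)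
    (hmeet : (convexHull ℝ (NullStar (frontier (DOD S)) r) ∩
        convexHull ℝ (NullStar (frontier (DOD S)) s)).Nonempty) :
    ∃ v : Fin 3 → ℝ, FutureNull v ∧
      ((∃ t : ℝ, 0 ≤ t ∧ s = r + t • v ∧ ∀ u : ℝ, 0 ≤ u → r + u • v ∈ frontier (DOD S)) ∨
       (∃ t : ℝ, 0 ≤ t ∧ r = s + t • v ∧ ∀ u : ℝ, 0 ≤ u → s + u • v ∈ frontier (DOD S))) :=
  faces_disjoint_unless_common_null_ray_general S hS r s hr hs hrs hmeet
end
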